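/- arXiv:2411.01047 — 11 statements merged into one kernel-verified Lean document; each statement's English description precedes it below -/
import Mathlib

section
/- Let p be a prime and let A be an m×m matrix over the field 𝔽_p = ℤ/pℤ such that A has finite multiplicative order k (i.e., k is the least positive integer with A^k = I; in particular A is invertible). Then there exists a vector v ∈ 𝔽_p^m whose minimal period under the map v ↦ Av is exactly k: A^k v = v and A^ℓ v ≠ v for every 1 ≤ ℓ < k. Equivalently, the move graph of A over ℤ/pℤ contains a directed cycle of length exactly k. -/
/-!
Regard `K^m` as a module over the PID `K[X]`, with `X` acting by `A`. By the structure theorem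
for finitely generated torsion modules, some vector `v` has annihilator equal to the annihilator
of the whole module. Applied to `X ^ ℓ - 1`, this says `A ^ ℓ v = v` only if `A ^ ℓ = 1`, so the
minimal period of `v` is the order of `A`.
-/

open Polynomial

namespace Module.End

variable {K V : Type*} [Field K] [AddCommGroup V] [Module K V] [FiniteDimensional K V]

theorem exists_aeval_apply_eq_zero_iff (f : End K V) :
    ∃ v : V, ∀ g : K[X], aeval f g v = 0 ↔ aeval f g = 0 := by
  obtain ⟨x, hx⟩ := Module.exists_ker_toSpanSingleton_eq_annihilator K[X] (AEval' f)
  obtain ⟨v, rfl⟩ := (AEval'.of f).surjective x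
  have hann : annihilator K[X] (AEval' f) = RingHom.ker (aeval f) :=
    AEval.annihilator_eq_ker_aeval f
  refine ⟨v, fun g => ?_⟩
  rw [← RingHom.mem_ker, ← hann, ← hx, LinearMap.mem_ker, LinearMap.toSpanSingleton_apply,
    ← AEval.of_aeval_smul, LinearEquiv.map_eq_zero_iff]
  rfl

theorem exists_pow_apply_eq_self_iff (f : End K V) :
    ∃ v : V, ∀ ℓ : ℕ, (f ^ ℓ) v = v ↔ f ^ ℓ = 1 := by
  obtain ⟨v, hv⟩ := exists_aeval_apply_eq_zero_iff f
  refine ⟨v, fun ℓ => ?_⟩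
  have h := hv (X ^ ℓ - 1)
  rwa [map_sub, aeval_X_pow, map_one, LinearMap.sub_apply, one_apply, sub_eq_zero,
    sub_eq_zero] at h

end Module.End

open Matrix in
theorem Matrix.exists_pow_mulVec_eq_self_iff {K n : Type*} [Field K] [Fintype n] [DecidableEq n]
    (A : Matrix n n K) : ∃ v : n → K, ∀ ℓ : ℕ, (A ^ ℓ) *ᵥ v = v ↔ A ^ ℓ = 1 := by
  obtain ⟨v, hv⟩ := Module.End.exists_pow_apply_eq_self_iff (toLinAlgEquiv' A)
  refine ⟨v, fun ℓ => ?_⟩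
  rw [← toLinAlgEquiv'_apply, map_pow, hv, ← map_pow, ← map_one toLinAlgEquiv',
    toLinAlgEquiv'.injective.eq_iff]

theorem stmt5_general (m p k : ℕ) (hp : p.Prime) (A : Matrix (Fin m) (Fin m) (ZMod p))
    (hAk : A ^ k = 1) (hmin : ∀ j, 0 < j → A ^ j = 1 → k ≤ j) :
    ∃ v : Fin m → ZMod p,
      (A ^ k).mulVec v = v ∧ ∀ ℓ, 0 < ℓ → ℓ < k → (A ^ ℓ).mulVec v ≠ v := by
  have : Fact p.Prime := ⟨hp⟩
  obtain ⟨v, hv⟩ := A.exists_pow_mulVec_eq_self_iff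
  exact ⟨v, (hv k).mpr hAk, fun ℓ hℓ hℓk hAℓ => hℓk.not_ge (hmin ℓ hℓ ((hv ℓ).mp hAℓ))⟩

/-- if `A` is an `m×m` matrix over `𝔽_p` of finite multiplicative order `k`,
then some vector `v ∈ 𝔽_p^m` has minimal period exactly `k` under `v ↦ Av`; i.e. the move
graph of `A` over `ℤ/pℤ` contains a directed cycle of length exactly `k`. -/
theorem stmt5 (m p k : ℕ) (hp : p.Prime) (A : Matrix (Fin m) (Fin m) (ZMod p))
    (hk : 0 < k) (hAk : A ^ k = 1) (hmin : ∀ j, 0 < j → A ^ j = 1 → k ≤ j) :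
    ∃ v : Fin m → ZMod p,
      (A ^ k).mulVec v = v ∧ ∀ ℓ, 0 < ℓ → ℓ < k → (A ^ ℓ).mulVec v ≠ v :=
  stmt5_general m p k hp A hAk hmin
end

section
/- Let n = 2^r with r ≥ 1, and let M be the sub-add matrix acting on (ℤ/2^rℤ)² by (a,b) ↦ (a−b, a+b). For every 0 ≤ i < 2r, if (a,b) ∈ P_i then its unique child (a−b, a+b) lies in P_{i+1}. For i = 2r, the lone vertex (0,0) ∈ P_{2r} is its own unique child. -/
/-!
Write a vertex of `P_i` as `2^t (x, y)`; the sub-add map sends it to `2^t (x - y, x + y)`.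
Since `2 ∣ 2^r`, parity is reduction to `ZMod 2`, a ring hom, so `x ∓ y` is odd exactly when
one of `x, y` is. Thus exactly one odd coordinate (`P_{2t}`) gives two odd coordinates
(`P_{2t+1}`), while two odd coordinates give `x ∓ y` both even, `= 2 (u, x - u)` with
`u + (x - u) = x` odd, i.e. a vertex of `P_{2t+2}`, which is `(0, 0)` once `2^{t+1} = 2^r = 0`.
-/

/-- The level sets `P_i` partitioning `(ℤ/2^rℤ)²`: for `0 ≤ t ≤ r-1`,
`P_{2t} = {(2^t x, 2^t y) : exactly one of x, y odd}` and
`P_{2t+1} = {(2^t x, 2^t y) : both x, y odd}`, and `P_{2r} = {(0,0)}`.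
Parity of an element of `ℤ/2^rℤ` is the parity of its canonical representative `val`. -/
def P (r i : ℕ) : Set (ZMod (2 ^ r) × ZMod (2 ^ r)) :=
  if i = 2 * r then {(0, 0)}
  else if Even i then
    {v | ∃ x y : ZMod (2 ^ r),
      v = ((2 : ZMod (2 ^ r)) ^ (i / 2) * x, (2 : ZMod (2 ^ r)) ^ (i / 2) * y) ∧
        Xor' (Odd x.val) (Odd y.val)}
  else
    {v | ∃ x y : ZMod (2 ^ r),
      v = ((2 : ZMod (2 ^ r)) ^ (i / 2) * x, (2 : ZMod (2 ^ r)) ^ (i / 2) * y) ∧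
        Odd x.val ∧ Odd y.val}

namespace ZMod

theorem add_eq_one_iff_xor (p q : ZMod 2) : p + q = 1 ↔ Xor (p = 1) (q = 1) := by
  revert p q; unfold Xor; decide

section Parity

variable {n : ℕ} [NeZero n]

theorem exists_eq_two_mul_of_even_val {a : ZMod n} (ha : Even a.val) : ∃ u, a = 2 * u := by
  obtain ⟨k, hk⟩ := ha
  exact ⟨k, by rw [← natCast_zmod_val a, hk]; push_cast; ring⟩

variable (hn : 2 ∣ n)
include hn

theorem odd_val_iff_castHom_eq_one (a : ZMod n) : Odd a.val ↔ castHom hn (ZMod 2) a = 1 := by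
  rw [castHom_apply, ← natCast_val, natCast_eq_one_iff_odd]

theorem odd_val_add_iff (a b : ZMod n) : Odd (a + b).val ↔ Xor (Odd a.val) (Odd b.val) := by
  simp only [odd_val_iff_castHom_eq_one hn, map_add, add_eq_one_iff_xor]

theorem odd_val_sub_iff (a b : ZMod n) : Odd (a - b).val ↔ Xor (Odd a.val) (Odd b.val) := by
  simp only [sub_eq_add_neg, odd_val_iff_castHom_eq_one hn, map_add, map_neg, neg_eq_self_mod_two,
    add_eq_one_iff_xor]

theorem exists_sub_add_eq_two_mul_of_odd_val {x y : ZMod n} (hx : Odd x.val) (hy : Odd y.val) :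
    ∃ u w, x - y = 2 * u ∧ x + y = 2 * w ∧ Xor (Odd u.val) (Odd w.val) := by
  have hsub : Even (x - y).val := by
    rw [← Nat.not_odd_iff_even, odd_val_sub_iff hn, eq_true hx, eq_true hy, xor_self]
    exact not_false
  obtain ⟨u, hu⟩ := exists_eq_two_mul_of_even_val hsub
  refine ⟨u, x - u, hu, by linear_combination -hu, ?_⟩
  rwa [← odd_val_add_iff hn, add_sub_cancel]

end Parity

end ZMod

theorem mem_P_two_mul {r t : ℕ} (ht : t ≠ r) {v : ZMod (2 ^ r) × ZMod (2 ^ r)} :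
    v ∈ P r (2 * t) ↔
      ∃ x y : ZMod (2 ^ r), v = (2 ^ t * x, 2 ^ t * y) ∧ Xor (Odd x.val) (Odd y.val) := by
  rw [P, if_neg (by omega), if_pos (even_two_mul t), Nat.mul_div_cancel_left t two_pos]
  rfl

theorem mem_P_two_mul_add_one {r t : ℕ} {v : ZMod (2 ^ r) × ZMod (2 ^ r)} :
    v ∈ P r (2 * t + 1) ↔
      ∃ x y : ZMod (2 ^ r), v = (2 ^ t * x, 2 ^ t * y) ∧ Odd x.val ∧ Odd y.val := by
  rw [P, if_neg (by omega), if_neg (Nat.not_even_two_mul_add_one t),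
    show (2 * t + 1) / 2 = t by omega]
  rfl

theorem P_two_mul_self (r : ℕ) : P r (2 * r) = {(0, 0)} := if_pos rfl

theorem two_pow_eq_zero (r : ℕ) : (2 : ZMod (2 ^ r)) ^ r = 0 := by
  exact_mod_cast ZMod.natCast_self (2 ^ r)

section SubAdd

variable {r t : ℕ} {a b : ZMod (2 ^ r)}

theorem sub_add_mem_P_two_mul_add_one (ht : t < r) (h : (a, b) ∈ P r (2 * t)) :
    (a - b, a + b) ∈ P r (2 * t + 1) := by
  obtain ⟨x, y, hxy, hodd⟩ := (mem_P_two_mul ht.ne).1 h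
  obtain ⟨rfl, rfl⟩ := Prod.mk.inj hxy
  have hn : 2 ∣ 2 ^ r := dvd_pow_self 2 (by omega)
  exact mem_P_two_mul_add_one.2 ⟨x - y, x + y, by ext <;> ring,
    (ZMod.odd_val_sub_iff hn x y).2 hodd, (ZMod.odd_val_add_iff hn x y).2 hodd⟩

theorem sub_add_mem_P_two_mul_add_two (ht : t < r) (h : (a, b) ∈ P r (2 * t + 1)) :
    (a - b, a + b) ∈ P r (2 * t + 1 + 1) := by
  obtain ⟨x, y, hxy, hx, hy⟩ := mem_P_two_mul_add_one.1 h
  obtain ⟨rfl, rfl⟩ := Prod.mk.inj hxy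
  obtain ⟨u, w, hu, hw, hxor⟩ :=
    ZMod.exists_sub_add_eq_two_mul_of_odd_val (dvd_pow_self 2 (by omega)) hx hy
  have hchild : (2 ^ t * x - 2 ^ t * y, 2 ^ t * x + 2 ^ t * y) =
      (2 ^ (t + 1) * u, 2 ^ (t + 1) * w) := by
    rw [← mul_sub, ← mul_add, hu, hw, pow_succ]
    ext <;> ring
  rw [hchild, show 2 * t + 1 + 1 = 2 * (t + 1) by ring]
  rcases (Nat.succ_le_of_lt ht).eq_or_lt with rfl | hlt
  · simp [P_two_mul_self, two_pow_eq_zero]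
  · exact (mem_P_two_mul hlt.ne).2 ⟨u, w, rfl, hxor⟩

end SubAdd

theorem stmt6_general (r : ℕ) :
    (∀ i < 2 * r, ∀ a b : ZMod (2 ^ r), (a, b) ∈ P r i → (a - b, a + b) ∈ P r (i + 1)) ∧
    ((0 : ZMod (2 ^ r)) - 0, (0 : ZMod (2 ^ r)) + 0) = ((0 : ZMod (2 ^ r)), (0 : ZMod (2 ^ r))) := by
  refine ⟨fun i hi a b hab => ?_, by simp⟩
  obtain ⟨t, rfl | rfl⟩ := Nat.even_or_odd' i
  · exact sub_add_mem_P_two_mul_add_one (by omega) hab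
  · exact sub_add_mem_P_two_mul_add_two (by omega) hab

/-- under the sub-add map `(a,b) ↦ (a-b, a+b)` on `(ℤ/2^rℤ)²`, for every
`0 ≤ i < 2r` the unique child of a vertex of `P_i` lies in `P_{i+1}`; and the lone vertex
`(0,0) ∈ P_{2r}` is its own unique child. -/
theorem stmt6 (r : ℕ) (hr : 1 ≤ r) :
    (∀ i < 2 * r, ∀ a b : ZMod (2 ^ r), (a, b) ∈ P r i → (a - b, a + b) ∈ P r (i + 1)) ∧
    ((0 : ZMod (2 ^ r)) - 0, (0 : ZMod (2 ^ r)) + 0) = ((0 : ZMod (2 ^ r)), (0 : ZMod (2 ^ r))) :=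
  stmt6_general r
end

section
/- Let n = 2^r with r > 1 and let M be the sub-add matrix acting on (ℤ/2^rℤ)² by (a,b) ↦ (a−b, a+b). Then for every 0 ≤ i ≤ 2r−1, each vertex v ∈ P_{i+1} has exactly two parents; that is, the set {u ∈ (ℤ/2^rℤ)² : Mu = v} has exactly two elements (namely, if u is one parent then u + (2^{r−1}, 2^{r−1}) is the other). -/
lemma stmt8_pow_ne (r : ℕ) (hr : 0 < r) : (2 : ZMod (2 ^ r)) ^ (r - 1) ≠ 0 := by
  haveI : NeZero (2 ^ r) := ⟨by positivity⟩
  have h : ((2 ^ (r - 1) : ℕ) : ZMod (2 ^ r)) ≠ 0 := by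
    rw [Ne, ZMod.natCast_eq_zero_iff]
    intro h
    have h1 := Nat.le_of_dvd (by positivity) h
    have h2 : 2 ^ (r - 1) < 2 ^ r := Nat.pow_lt_pow_right one_lt_two (by omega)
    omega
  simpa using h

lemma stmt8_pow_add_pow (r : ℕ) (hr : 0 < r) :
    (2 : ZMod (2 ^ r)) ^ (r - 1) + 2 ^ (r - 1) = 0 := by
  haveI : NeZero (2 ^ r) := ⟨by positivity⟩
  have h1 : (2 : ZMod (2 ^ r)) ^ (r - 1) + 2 ^ (r - 1) = 2 ^ r := by
    calc (2 : ZMod (2 ^ r)) ^ (r - 1) + 2 ^ (r - 1) = 2 ^ (r - 1) * 2 := by ring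
    _ = 2 ^ (r - 1 + 1) := (pow_succ 2 (r - 1)).symm
    _ = 2 ^ r := by rw [Nat.sub_add_cancel hr]
  rw [h1]
  have := ZMod.natCast_self (2 ^ r)
  push_cast at this
  exact this

lemma stmt8_double_iff (r : ℕ) (hr : 0 < r) (a : ZMod (2 ^ r)) :
    a + a = 0 ↔ a = 0 ∨ a = (2 : ZMod (2 ^ r)) ^ (r - 1) := by
  haveI : NeZero (2 ^ r) := ⟨by positivity⟩
  constructor
  · intro h
    have hc : ((a.val + a.val : ℕ) : ZMod (2 ^ r)) = 0 := by push_cast; simpa using h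
    have hd : (2 ^ r : ℕ) ∣ a.val + a.val :=
      (ZMod.natCast_eq_zero_iff _ _).mp hc
    have hlt : a.val < 2 ^ r := a.val_lt
    have hr2 : (2 : ℕ) ^ (r - 1) + 2 ^ (r - 1) = 2 ^ r := by
      calc (2 : ℕ) ^ (r - 1) + 2 ^ (r - 1) = 2 ^ (r - 1) * 2 := by ring
      _ = 2 ^ (r - 1 + 1) := (pow_succ 2 (r - 1)).symm
      _ = 2 ^ r := by rw [Nat.sub_add_cancel hr]
    obtain ⟨c, hc2⟩ := hd
    have hclt : c < 2 := by
      by_contra hcc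
      push_neg at hcc
      have hmul : 2 ^ r * 2 ≤ 2 ^ r * c := Nat.mul_le_mul_left _ hcc
      omega
    interval_cases c
    · left
      have : a.val = 0 := by omega
      exact (ZMod.val_eq_zero a).mp this
    · right
      have h0 : a.val = 2 ^ (r - 1) := by omega
      have ha : a = ((a.val : ℕ) : ZMod (2 ^ r)) := by simp [ZMod.natCast_val, ZMod.cast_id]
      rw [ha, h0]; push_cast; ring
  · rintro (rfl | rfl)
    · simp
    · exact stmt8_pow_add_pow r hr

lemma stmt8_even_of_double (r : ℕ) (hr : 0 < r) (z : ZMod (2 ^ r)) : 2 ∣ (z + z).val := by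
  haveI : NeZero (2 ^ r) := ⟨by positivity⟩
  rw [ZMod.val_add]
  exact (Nat.dvd_mod_iff (dvd_pow_self 2 (by omega))).mpr ⟨z.val, by ring⟩

lemma stmt8_sum_helper (r t : ℕ) (hr : 0 < r) (x y : ZMod (2 ^ r)) :
    2 ∣ ((2 : ZMod (2 ^ r)) ^ (t + 1) * x + (2 : ZMod (2 ^ r)) ^ (t + 1) * y).val := by
  have h : (2 : ZMod (2 ^ r)) ^ (t + 1) * x + (2 : ZMod (2 ^ r)) ^ (t + 1) * y
      = (2 ^ t * (x + y)) + (2 ^ t * (x + y)) := by ring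
  rw [h]
  exact stmt8_even_of_double r hr _

lemma stmt8_sum_even (r : ℕ) (hr : 1 < r) (i : ℕ) (v : ZMod (2 ^ r) × ZMod (2 ^ r))
    (hv : v ∈ P r (i + 1)) : 2 ∣ (v.1 + v.2).val := by
  haveI : NeZero (2 ^ r) := ⟨by positivity⟩
  have hr0 : 0 < r := by omega
  unfold P at hv
  split_ifs at hv with h1 h2
  · rw [Set.mem_singleton_iff] at hv
    rw [hv]
    simp
  · obtain ⟨x, y, hxy, -⟩ := hv
    obtain ⟨m, hm⟩ := h2
    have hm1 : 1 ≤ m := by omega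
    have ht : (i + 1) / 2 = (m - 1) + 1 := by omega
    rw [hxy]
    simp only [ht]
    exact stmt8_sum_helper r (m - 1) hr0 x y
  · obtain ⟨x, y, hxy, hx, hy⟩ := hv
    rcases Nat.eq_zero_or_pos ((i + 1) / 2) with ht | ht
    · rw [hxy]
      simp only [ht, pow_zero, one_mul]
      rw [ZMod.val_add]
      rw [Nat.dvd_mod_iff (dvd_pow_self 2 (by omega))]
      obtain ⟨k, hk⟩ := hx
      obtain ⟨l, hl⟩ := hy
      omega
    · obtain ⟨s, hs⟩ : ∃ s, (i + 1) / 2 = s + 1 := ⟨(i + 1) / 2 - 1, by omega⟩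
      rw [hxy, hs]
      exact stmt8_sum_helper r s hr0 x y

/-- for `r > 1` and every `0 ≤ i ≤ 2r-1`, each vertex `v ∈ P_{i+1}` has
exactly two parents under the sub-add map `(a,b) ↦ (a-b, a+b)`; namely, if `u` is one
parent then `u + (2^{r-1}, 2^{r-1})` is the other. -/
theorem stmt8 (r : ℕ) (hr : 1 < r) :
    ∀ i ≤ 2 * r - 1, ∀ v ∈ P r (i + 1),
      {u : ZMod (2 ^ r) × ZMod (2 ^ r) | (u.1 - u.2, u.1 + u.2) = v}.ncard = 2 ∧
      ∀ u : ZMod (2 ^ r) × ZMod (2 ^ r), (u.1 - u.2, u.1 + u.2) = v →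
        {w : ZMod (2 ^ r) × ZMod (2 ^ r) | (w.1 - w.2, w.1 + w.2) = v} =
          {u, u + ((2 : ZMod (2 ^ r)) ^ (r - 1), (2 : ZMod (2 ^ r)) ^ (r - 1))} := by
  intro i hi v hv
  haveI : NeZero (2 ^ r) := ⟨by positivity⟩
  have hr0 : 0 < r := by omega
  have hev : 2 ∣ (v.1 + v.2).val := stmt8_sum_even r hr i v hv
  -- a parent exists
  set a : ZMod (2 ^ r) := (((v.1 + v.2).val / 2 : ℕ) : ZMod (2 ^ r)) with ha_def
  have ha : a + a = v.1 + v.2 := by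
    rw [ha_def, ← Nat.cast_add]
    have h : (v.1 + v.2).val / 2 + (v.1 + v.2).val / 2 = (v.1 + v.2).val := by omega
    rw [h]
    simp [ZMod.natCast_val, ZMod.cast_id]
  have hu0 : (((a, a - v.1) : ZMod (2 ^ r) × ZMod (2 ^ r)).1 - (a, a - v.1).2,
      ((a, a - v.1) : ZMod (2 ^ r) × ZMod (2 ^ r)).1 + (a, a - v.1).2) = v := by
    rw [Prod.ext_iff]
    exact ⟨by show a - (a - v.1) = v.1; ring, by show a + (a - v.1) = v.2; linear_combination ha⟩
  -- key set equality
  have hkey : ∀ u : ZMod (2 ^ r) × ZMod (2 ^ r), (u.1 - u.2, u.1 + u.2) = v →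
      {w : ZMod (2 ^ r) × ZMod (2 ^ r) | (w.1 - w.2, w.1 + w.2) = v} =
        {u, u + ((2 : ZMod (2 ^ r)) ^ (r - 1), (2 : ZMod (2 ^ r)) ^ (r - 1))} := by
    intro u hu
    ext w
    simp only [Set.mem_setOf_eq, Set.mem_insert_iff, Set.mem_singleton_iff]
    constructor
    · intro hw
      rw [← hu] at hw
      simp only [Prod.mk.injEq] at hw
      obtain ⟨h1, h2⟩ := hw
      have hdd : (w.1 - u.1) + (w.1 - u.1) = 0 := by linear_combination h1 + h2
      rcases (stmt8_double_iff r hr0 _).mp hdd with h | h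
      · left
        rw [Prod.ext_iff]
        exact ⟨by linear_combination h, by linear_combination h - h1⟩
      · right
        rw [Prod.ext_iff]
        simp only [Prod.fst_add, Prod.snd_add]
        exact ⟨by linear_combination h, by linear_combination h - h1⟩
    · rintro (rfl | rfl)
      · exact hu
      · rw [← hu]
        simp only [Prod.fst_add, Prod.snd_add, Prod.mk.injEq]
        exact ⟨by ring, by linear_combination stmt8_pow_add_pow r hr0⟩
  refine ⟨?_, hkey⟩
  rw [hkey _ hu0]
  refine Set.ncard_pair ?_
  intro hcontra
  rw [Prod.ext_iff] at hcontra
  simp only [Prod.fst_add] at hcontra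
  exact stmt8_pow_ne r hr0 (by linear_combination -hcontra.1)
end

section
/- Let n = 2^r with r ≥ 1 and let M be the sub-add matrix acting on (ℤ/2^rℤ)² by (a,b) ↦ (a−b, a+b). Then the subgraph of Γ_{M,2^r} induced on the nonzero vertices is an inverted perfect binary tree of depth 2r−1 rooted at (2^{r−1}, 2^{r−1}). Concretely: (i) (2^{r−1}, 2^{r−1}) is the unique nonzero vertex v with Mv = (0,0); (ii) every vertex in P_0 is parentless (these are the leaves), and for r > 1 every nonzero vertex not in P_0 has exactly two parents; (iii) every vertex v ∈ P_i with 0 ≤ i ≤ 2r−1 satisfies M^{2r−1−i} v = (2^{r−1}, 2^{r−1}), so every leaf is at distance exactly 2r−1 from the root. Moreover, Γ_{M,2^r} is recovered from this tree by adding the vertex (0,0) together with the arcs ((2^{r−1},2^{r−1}), (0,0)) and ((0,0), (0,0)). -/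
/-!
Everything reduces to halving and parity in `ℤ/2^rℤ`. The two coordinates of `M u` add up
to `2 u₁`, so `v` has a parent iff `v₁ + v₂` is even, and then the parents are the solutions of
`2 u₁ = v₁ + v₂`, `u₂ = u₁ - v₁`: exactly two, differing by `2^{r-1}` in each coordinate.
Since `M² (a, b) = (-2b, 2a)`, two steps turn `2^t (x, y)` with `x, y` odd into
`2^{t+1} (-y, x)`, again with odd entries, until `t = r - 1`, where `2^{r-1} x = 2^{r-1}` for
every odd `x`. One step sends `P_{2t}` to `P_{2t+1}`, since `x - y` and `x + y` are odd when
exactly one of `x`, `y` is.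
-/

/-- The sub-add map `(a,b) ↦ (a-b, a+b)` on `(ℤ/nℤ)²`; the sub-add move graph `Γ_{M,n}`
has an arc from `v` to `subAddStep n v`. -/
def subAddStep (n : ℕ) (v : ZMod n × ZMod n) : ZMod n × ZMod n :=
  (v.1 - v.2, v.1 + v.2)

section subAddStep

variable {n : ℕ}

theorem subAddStep_eq_iff (u v : ZMod n × ZMod n) :
    subAddStep n u = v ↔ 2 * u.1 = v.1 + v.2 ∧ u.2 = u.1 - v.1 := by
  rw [subAddStep, Prod.ext_iff]
  constructor
  · rintro ⟨h₁, h₂⟩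
    exact ⟨by rw [← h₁, ← h₂]; ring, by rw [← h₁]; ring⟩
  · rintro ⟨h₁, h₂⟩
    exact ⟨by rw [h₂]; ring, by rw [h₂]; linear_combination h₁⟩

theorem subAddStep_iterate_two (v : ZMod n × ZMod n) :
    (subAddStep n)^[2] v = (-(2 * v.2), 2 * v.1) := by
  simp only [Function.iterate_succ, Function.iterate_zero, Function.comp_apply, id, subAddStep]
  ext <;> ring

end subAddStep

section PowTwo

variable {k : ℕ}

theorem ZMod.xor_eq_one_iff_add_eq_one (a b : ZMod 2) : Xor' (a = 1) (b = 1) ↔ a + b = 1 := by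
  revert a b
  unfold Xor'
  decide

def parity (k : ℕ) : ZMod (2 ^ (k + 1)) →+* ZMod 2 :=
  ZMod.castHom (dvd_pow_self 2 k.succ_ne_zero) (ZMod 2)

theorem parity_apply (x : ZMod (2 ^ (k + 1))) : parity k x = (x.val : ZMod 2) := by
  rw [parity, ZMod.castHom_apply, ZMod.cast_eq_val]

theorem parity_eq_one_iff (x : ZMod (2 ^ (k + 1))) : parity k x = 1 ↔ Odd x.val := by
  rw [parity_apply, ZMod.natCast_eq_one_iff_odd]

theorem parity_two : parity k 2 = 0 := by
  rw [map_ofNat]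
  rfl

theorem exists_eq_two_mul_of_parity_eq_zero {x : ZMod (2 ^ (k + 1))} (hx : parity k x = 0) :
    ∃ y, x = 2 * y := by
  rw [parity_apply, ZMod.natCast_eq_zero_iff_even] at hx
  obtain ⟨m, hm⟩ := hx
  exact ⟨m, by rw [← ZMod.natCast_zmod_val x, hm, Nat.cast_add, two_mul]⟩

theorem two_mul_two_pow : (2 : ZMod (2 ^ (k + 1))) * 2 ^ k = 0 := by
  rw [← pow_succ']
  exact_mod_cast ZMod.natCast_self (2 ^ (k + 1))

theorem two_pow_ne_zero : (2 : ZMod (2 ^ (k + 1))) ^ k ≠ 0 := by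
  intro h
  have hdvd : 2 ^ (k + 1) ∣ 2 ^ k := (ZMod.natCast_eq_zero_iff _ _).1 (by exact_mod_cast h)
  exact Nat.not_dvd_of_pos_of_lt (by positivity)
    (Nat.pow_lt_pow_right one_lt_two k.lt_succ_self) hdvd

theorem two_mul_eq_zero_iff (z : ZMod (2 ^ (k + 1))) : 2 * z = 0 ↔ z = 0 ∨ z = 2 ^ k := by
  refine ⟨fun h => ?_, ?_⟩
  · obtain ⟨q, hq⟩ : 2 ^ k ∣ z.val := by
      rw [← Nat.mul_dvd_mul_iff_left two_pos, ← pow_succ', ← ZMod.natCast_eq_zero_iff,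
        Nat.cast_mul, ZMod.natCast_zmod_val]
      exact_mod_cast h
    have hq₂ : q < 2 := by
      have := ZMod.val_lt z
      rw [hq, pow_succ] at this
      exact Nat.lt_of_mul_lt_mul_left this
    rw [← ZMod.natCast_zmod_val z, hq]
    interval_cases q <;> simp
  · rintro (rfl | rfl)
    · exact mul_zero 2
    · exact two_mul_two_pow

theorem two_pow_mul_of_parity_eq_one {x : ZMod (2 ^ (k + 1))} (hx : parity k x = 1) :
    2 ^ k * x = 2 ^ k := by
  obtain ⟨y, hy⟩ := exists_eq_two_mul_of_parity_eq_zero (x := x - 1)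
    (by rw [map_sub, hx, map_one, sub_self])
  linear_combination (2 ^ k : ZMod (2 ^ (k + 1))) * hy + y * two_mul_two_pow

end PowTwo

section SubAddTree

variable {k : ℕ}

theorem subAddStep_two_pow :
    subAddStep (2 ^ (k + 1)) ((2 : ZMod (2 ^ (k + 1))) ^ k, 2 ^ k) = (0, 0) := by
  rw [subAddStep, sub_self, ← two_mul, two_mul_two_pow]

theorem eq_two_pow_of_subAddStep_eq_zero {v : ZMod (2 ^ (k + 1)) × ZMod (2 ^ (k + 1))}
    (hv : v ≠ (0, 0)) (h : subAddStep (2 ^ (k + 1)) v = (0, 0)) : v = (2 ^ k, 2 ^ k) := by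
  obtain ⟨h₁, h₂⟩ := (subAddStep_eq_iff v (0, 0)).1 h
  rw [add_zero, two_mul_eq_zero_iff] at h₁
  rw [sub_zero] at h₂
  rcases h₁ with h₁ | h₁
  · exact absurd (Prod.ext h₁ (h₂.trans h₁)) hv
  · exact Prod.ext h₁ (h₂.trans h₁)

theorem mem_P_zero_iff (v : ZMod (2 ^ (k + 1)) × ZMod (2 ^ (k + 1))) :
    v ∈ P (k + 1) 0 ↔ parity k (v.1 + v.2) = 1 := by
  rw [P, if_neg (by omega), if_pos Even.zero, map_add, ← ZMod.xor_eq_one_iff_add_eq_one,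
    parity_eq_one_iff, parity_eq_one_iff]
  simp only [Set.mem_ofPred_eq, Nat.zero_div, pow_zero, one_mul]
  exact ⟨fun ⟨x, y, hv, h⟩ => hv ▸ h, fun h => ⟨v.1, v.2, rfl, h⟩⟩

theorem not_exists_subAddStep_eq_of_mem_P_zero {v : ZMod (2 ^ (k + 1)) × ZMod (2 ^ (k + 1))}
    (hv : v ∈ P (k + 1) 0) : ¬ ∃ u, subAddStep (2 ^ (k + 1)) u = v := by
  rintro ⟨u, rfl⟩
  rw [mem_P_zero_iff, ((subAddStep_eq_iff u _).1 rfl).1.symm, map_mul, parity_two,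
    zero_mul] at hv
  exact zero_ne_one hv

theorem subAddStep_preimage_eq_pair {v : ZMod (2 ^ (k + 1)) × ZMod (2 ^ (k + 1))}
    (hv : v ∉ P (k + 1) 0) : ∃ c, {u | subAddStep (2 ^ (k + 1)) u = v} =
      {(c, c - v.1), (c + 2 ^ k, c + 2 ^ k - v.1)} := by
  have hpar : ∀ a : ZMod 2, a ≠ 1 → a = 0 := by decide
  rw [mem_P_zero_iff] at hv
  obtain ⟨c, hc⟩ := exists_eq_two_mul_of_parity_eq_zero (hpar _ hv)
  refine ⟨c, Set.ext fun u => ?_⟩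
  have hu₁ : 2 * u.1 = v.1 + v.2 ↔ u.1 = c ∨ u.1 = c + 2 ^ k := by
    rw [hc, ← sub_eq_zero, ← mul_sub, two_mul_eq_zero_iff, sub_eq_zero, sub_eq_iff_eq_add']
  rw [Set.mem_ofPred_eq, subAddStep_eq_iff, hu₁, Set.mem_insert_iff, Set.mem_singleton_iff,
    Prod.ext_iff, Prod.ext_iff]
  constructor
  · rintro ⟨h₁ | h₁, h₂⟩
    · exact Or.inl ⟨h₁, h₂.trans (by rw [h₁])⟩
    · exact Or.inr ⟨h₁, h₂.trans (by rw [h₁])⟩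
  · rintro (⟨h₁, h₂⟩ | ⟨h₁, h₂⟩)
    · exact ⟨Or.inl h₁, h₂.trans (by rw [h₁])⟩
    · exact ⟨Or.inr h₁, h₂.trans (by rw [h₁])⟩

theorem ncard_subAddStep_preimage {v : ZMod (2 ^ (k + 1)) × ZMod (2 ^ (k + 1))}
    (hv : v ∉ P (k + 1) 0) : {u | subAddStep (2 ^ (k + 1)) u = v}.ncard = 2 := by
  obtain ⟨c, hc⟩ := subAddStep_preimage_eq_pair hv
  rw [hc, Set.ncard_pair]
  intro h
  exact two_pow_ne_zero (left_eq_add.1 (Prod.mk.inj h).1)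

theorem iterate_subAddStep_two_pow_mul {s t : ℕ} (hst : s + t = k)
    {x y : ZMod (2 ^ (k + 1))} (hx : parity k x = 1) (hy : parity k y = 1) :
    (subAddStep (2 ^ (k + 1)))^[2 * s] (2 ^ t * x, 2 ^ t * y) = (2 ^ k, 2 ^ k) := by
  induction s generalizing t x y with
  | zero =>
    obtain rfl : t = k := by omega
    rw [Nat.mul_zero, Function.iterate_zero_apply, two_pow_mul_of_parity_eq_one hx,
      two_pow_mul_of_parity_eq_one hy]
  | succ s ih =>
    have hy' : parity k (-y) = 1 := by rw [map_neg, hy]; decide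
    rw [Nat.mul_succ, Function.iterate_add_apply, subAddStep_iterate_two,
      ← ih (t := t + 1) (by omega) hy' hx]
    congr 2 <;> ring

theorem iterate_subAddStep_of_mem_P {i : ℕ} (hi : i ≤ 2 * k + 1)
    {v : ZMod (2 ^ (k + 1)) × ZMod (2 ^ (k + 1))} (hv : v ∈ P (k + 1) i) :
    (subAddStep (2 ^ (k + 1)))^[2 * k + 1 - i] v = (2 ^ k, 2 ^ k) := by
  rw [P, if_neg (by omega)] at hv
  split_ifs at hv with hi_even
  · obtain ⟨x, y, rfl, hxy⟩ := hv
    rw [← parity_eq_one_iff, ← parity_eq_one_iff, ZMod.xor_eq_one_iff_add_eq_one, ← map_add]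
      at hxy
    have hsub : parity k (x - y) = 1 := by rw [map_sub, CharTwo.sub_eq_add, ← map_add, hxy]
    rw [Nat.even_iff] at hi_even
    rw [show 2 * k + 1 - i = 2 * (k - i / 2) + 1 by omega, Function.iterate_succ_apply,
      subAddStep, ← mul_sub, ← mul_add]
    exact iterate_subAddStep_two_pow_mul (by omega) hsub hxy
  · obtain ⟨x, y, rfl, hx, hy⟩ := hv
    rw [Nat.not_even_iff] at hi_even
    rw [← parity_eq_one_iff] at hx hy
    rw [show 2 * k + 1 - i = 2 * (k - i / 2) by omega]
    exact iterate_subAddStep_two_pow_mul (by omega) hx hy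

end SubAddTree

/-- the subgraph of `Γ_{M,2^r}` induced on the nonzero vertices is an
inverted perfect binary tree of depth `2r-1` rooted at `c = (2^{r-1}, 2^{r-1})`:
(i) `c` is the unique nonzero vertex mapping to `(0,0)`;
(ii) the vertices of `P_0` are parentless (the leaves), and for `r > 1` every nonzero
vertex not in `P_0` has exactly two parents;
(iii) every `v ∈ P_i` with `0 ≤ i ≤ 2r-1` satisfies `M^{2r-1-i} v = c` (so every leaf is
at distance exactly `2r-1` from the root).
Moreover `Γ_{M,2^r}` is recovered by adding the vertex `(0,0)` with the arcs
`(c, (0,0))` and `((0,0), (0,0))`. -/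
theorem stmt10 (r : ℕ) (hr : 1 ≤ r) :
    (((2 : ZMod (2 ^ r)) ^ (r - 1), (2 : ZMod (2 ^ r)) ^ (r - 1)) ≠ ((0 : ZMod (2 ^ r)), (0 : ZMod (2 ^ r))) ∧
      subAddStep (2 ^ r) ((2 : ZMod (2 ^ r)) ^ (r - 1), (2 : ZMod (2 ^ r)) ^ (r - 1)) = (0, 0) ∧
      ∀ v : ZMod (2 ^ r) × ZMod (2 ^ r), v ≠ (0, 0) → subAddStep (2 ^ r) v = (0, 0) →
        v = ((2 : ZMod (2 ^ r)) ^ (r - 1), (2 : ZMod (2 ^ r)) ^ (r - 1))) ∧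
    (∀ v ∈ P r 0, ¬ ∃ u, subAddStep (2 ^ r) u = v) ∧
    (1 < r → ∀ v : ZMod (2 ^ r) × ZMod (2 ^ r), v ≠ (0, 0) → v ∉ P r 0 →
      {u : ZMod (2 ^ r) × ZMod (2 ^ r) | subAddStep (2 ^ r) u = v}.ncard = 2) ∧
    (∀ i ≤ 2 * r - 1, ∀ v ∈ P r i,
      (subAddStep (2 ^ r))^[2 * r - 1 - i] v =
        ((2 : ZMod (2 ^ r)) ^ (r - 1), (2 : ZMod (2 ^ r)) ^ (r - 1))) ∧
    subAddStep (2 ^ r) (0, 0) = ((0 : ZMod (2 ^ r)), (0 : ZMod (2 ^ r))) := by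
  obtain ⟨k, rfl⟩ : ∃ k, r = k + 1 := ⟨r - 1, by omega⟩
  rw [Nat.add_sub_cancel, show 2 * (k + 1) - 1 = 2 * k + 1 by omega]
  refine ⟨⟨fun h => two_pow_ne_zero (Prod.mk.inj h).1, subAddStep_two_pow,
    fun v => eq_two_pow_of_subAddStep_eq_zero⟩, fun v => not_exists_subAddStep_eq_of_mem_P_zero,
    fun _ v _ => ncard_subAddStep_preimage, fun i => iterate_subAddStep_of_mem_P, ?_⟩
  rw [subAddStep, sub_zero, add_zero]
end

section
/- Let n ≥ 3 be odd and let M be the sub-add matrix acting on (ℤ/nℤ)² by (a,b) ↦ (a−b, a+b). Then M^{4·φ(n)} x = x for every x ∈ (ℤ/nℤ)², where φ is Euler's totient function; consequently the length of every directed cycle in Γ_{M,n} divides 4·φ(n). -/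
lemma subAddStep_four (n : ℕ) (x : ZMod n × ZMod n) :
    (subAddStep n)^[4] x = ((-4 : ZMod n) * x.1, (-4 : ZMod n) * x.2) := by
  simp only [Function.iterate_succ, Function.iterate_zero, Function.comp_apply, id_eq,
    subAddStep]
  obtain ⟨a, b⟩ := x
  simp only [Prod.mk.injEq]
  constructor <;> ring

lemma subAddStep_four_mul (n k : ℕ) (x : ZMod n × ZMod n) :
    (subAddStep n)^[4 * k] x = ((-4 : ZMod n)^k * x.1, (-4 : ZMod n)^k * x.2) := by
  induction k generalizing x with
  | zero => simp
  | succ k ih =>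
    rw [Nat.mul_succ, Function.iterate_add_apply, ih, subAddStep_four]
    simp only [pow_succ, Prod.mk.injEq]
    constructor <;> ring

/-- for odd `n ≥ 3`, `M^{4·φ(n)} x = x` for every `x ∈ (ℤ/nℤ)²`, and hence
the length of every directed cycle in `Γ_{M,n}` (the minimal period of any vertex)
divides `4·φ(n)`. -/
theorem stmt12 (n : ℕ) (hn : 3 ≤ n) (hodd : Odd n) :
    (∀ x : ZMod n × ZMod n, (subAddStep n)^[4 * Nat.totient n] x = x) ∧
    ∀ x : ZMod n × ZMod n,
      Function.minimalPeriod (subAddStep n) x ∣ 4 * Nat.totient n := by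
  have hunit : IsUnit (-4 : ZMod n) := by
    rw [IsUnit.neg_iff]
    have : ((4 : ℕ) : ZMod n) = (4 : ZMod n) := by norm_cast
    rw [← this, ZMod.isUnit_iff_coprime]
    have h2 : Nat.Coprime 2 n := Nat.coprime_two_left.mpr hodd
    have : Nat.Coprime (2 ^ 2) n := h2.pow_left 2
    simpa using this
  have hpow : (-4 : ZMod n) ^ Nat.totient n = 1 := by
    obtain ⟨u, hu⟩ := hunit
    have := ZMod.pow_totient u
    calc (-4 : ZMod n) ^ Nat.totient n = ((u ^ Nat.totient n : (ZMod n)ˣ) : ZMod n) := by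
          rw [Units.val_pow_eq_pow_val, hu]
      _ = 1 := by rw [this]; rfl
  have key : ∀ x : ZMod n × ZMod n, (subAddStep n)^[4 * Nat.totient n] x = x := by
    intro x
    rw [subAddStep_four_mul, hpow]
    simp
  exact ⟨key, fun x => Function.IsPeriodicPt.minimalPeriod_dvd (key x)⟩
end

section
/- Let p be a prime with p ≡ 1 (mod 4), let i ∈ ℤ/pℤ satisfy i² = −1, and let M be the sub-add matrix acting on (ℤ/pℤ)² by (a,b) ↦ (a−b, a+b). Then every nonzero vertex x ∈ (ℤ/pℤ)² has minimal period under M equal to either the multiplicative order of 1+i or the multiplicative order of 1−i in (ℤ/pℤ)^×, and the only vertex with minimal period 1 is (0,0). Consequently, every directed cycle in Γ_{M,p} has length 1, ord(1−i), or ord(1+i). -/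
lemma subAdd_iter_add {p : ℕ} (i : ZMod p) (hi : i ^ 2 = -1) (x : ZMod p × ZMod p) (n : ℕ) :
    ((subAddStep p)^[n] x).1 + i * ((subAddStep p)^[n] x).2 = (1 + i) ^ n * (x.1 + i * x.2) := by
  induction n with
  | zero => simp
  | succ n ih =>
    rw [Function.iterate_succ_apply']
    show ((subAddStep p)^[n] x).1 - ((subAddStep p)^[n] x).2
        + i * (((subAddStep p)^[n] x).1 + ((subAddStep p)^[n] x).2) = _
    rw [pow_succ]
    linear_combination (1 + i) * ih - (((subAddStep p)^[n] x).2) * hi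

lemma subAdd_iter_sub {p : ℕ} (i : ZMod p) (hi : i ^ 2 = -1) (x : ZMod p × ZMod p) (n : ℕ) :
    ((subAddStep p)^[n] x).1 - i * ((subAddStep p)^[n] x).2 = (1 - i) ^ n * (x.1 - i * x.2) := by
  induction n with
  | zero => simp
  | succ n ih =>
    rw [Function.iterate_succ_apply']
    show ((subAddStep p)^[n] x).1 - ((subAddStep p)^[n] x).2
        - i * (((subAddStep p)^[n] x).1 + ((subAddStep p)^[n] x).2) = _
    rw [pow_succ]
    linear_combination (1 - i) * ih - (((subAddStep p)^[n] x).2) * hi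

/-- auxiliary: two naturals with mutual divisibility up to 4 are comparable -/
lemma aux_comp (e d : ℕ) (he : e ≠ 0) (hd : d ≠ 0) (h1 : e ∣ 4 * d) (h2 : d ∣ 4 * e) :
    e ∣ d ∨ d ∣ e := by
  have key : ∀ a b : ℕ, a ≠ 0 → b ≠ 0 → a ∣ 4 * b → a.factorization 2 ≤ b.factorization 2 →
      a ∣ b := by
    intro a b ha hb hab h2le
    rw [← Nat.factorization_le_iff_dvd ha hb]
    intro q
    rcases eq_or_ne q 2 with rfl | hq2
    · exact h2le
    by_cases hq : q.Prime
    · have h4 : (4 : ℕ) ≠ 0 := by norm_num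
      have hnd : ¬ q ∣ 4 := fun h => hq2
        ((Nat.prime_dvd_prime_iff_eq hq Nat.prime_two).mp
          (hq.dvd_of_dvd_pow (show q ∣ 2 ^ 2 by simpa using h)))
      have h40 : (Nat.factorization 4) q = 0 := Nat.factorization_eq_zero_of_not_dvd hnd
      have := (Nat.factorization_le_iff_dvd ha (mul_ne_zero h4 hb)).mpr hab q
      rwa [Nat.factorization_mul h4 hb, Finsupp.add_apply, h40, zero_add] at this
    · simp [Nat.factorization_eq_zero_of_not_prime _ hq]
  rcases le_total (e.factorization 2) (d.factorization 2) with h | h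
  · exact Or.inl (key e d he hd h1 h)
  · exact Or.inr (key d e hd he h2 h)

/-- for a prime `p ≡ 1 (mod 4)` and `i ∈ ℤ/pℤ` with `i² = -1`, every
nonzero vertex of `(ℤ/pℤ)²` has minimal period under the sub-add map equal to
`ord(1+i)` or `ord(1-i)`, and the only vertex of minimal period 1 is `(0,0)`; hence
every directed cycle of `Γ_{M,p}` has length `1`, `ord(1-i)`, or `ord(1+i)`. -/
theorem stmt14 (p : ℕ) (hp : p.Prime) (hp4 : p % 4 = 1) (i : ZMod p)
    (hi : i ^ 2 = -1) :
    (∀ x : ZMod p × ZMod p, x ≠ (0, 0) →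
      Function.minimalPeriod (subAddStep p) x = orderOf (1 + i) ∨
      Function.minimalPeriod (subAddStep p) x = orderOf (1 - i)) ∧
    (∀ x : ZMod p × ZMod p,
      Function.minimalPeriod (subAddStep p) x = 1 ↔ x = (0, 0)) := by
  haveI : Fact p.Prime := ⟨hp⟩
  have hp2 : p ≠ 2 := by rintro rfl; norm_num at hp4
  have htwo : (2 : ZMod p) ≠ 0 := by
    intro h
    have : ((2 : ℕ) : ZMod p) = 0 := by exact_mod_cast h
    have := (ZMod.natCast_eq_zero_iff 2 p).mp this
    exact hp2 ((Nat.prime_dvd_prime_iff_eq hp Nat.prime_two).mp this)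
  have hi0 : i ≠ 0 := by
    intro h
    exact htwo (by linear_combination 2 * hi - 2 * i * h)
  have hA : (1 + i : ZMod p) ≠ 0 := by
    intro h; apply htwo; linear_combination (1 - i) * h + hi
  have hB : (1 - i : ZMod p) ≠ 0 := by
    intro h; apply htwo; linear_combination (1 + i) * h + hi
  set e := orderOf (1 + i) with hedef
  set d := orderOf (1 - i) with hddef
  have hfin : ∀ a : ZMod p, a ≠ 0 → 0 < orderOf a := by
    intro a ha
    refine orderOf_pos_iff.mpr (isOfFinOrder_iff_pow_eq_one.mpr ⟨p - 1, ?_, ?_⟩)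
    · have := hp.one_lt; omega
    · exact ZMod.pow_card_sub_one_eq_one ha
  have he0 : e ≠ 0 := (hfin _ hA).ne'
  have hd0 : d ≠ 0 := (hfin _ hB).ne'
  have hi4 : i ^ 4 = 1 := by linear_combination (i ^ 2 - 1) * hi
  have hni4 : (-i) ^ 4 = 1 := by linear_combination (i ^ 2 - 1) * hi
  have hfacA : (1 + i : ZMod p) = i * (1 - i) := by linear_combination hi
  have hfacB : (1 - i : ZMod p) = -i * (1 + i) := by linear_combination hi
  have hEd : e ∣ 4 * d := by
    apply orderOf_dvd_of_pow_eq_one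
    rw [hfacA, mul_pow, pow_mul, hi4, one_pow, one_mul, mul_comm 4 d, pow_mul,
      pow_orderOf_eq_one, one_pow]
  have hDe : d ∣ 4 * e := by
    apply orderOf_dvd_of_pow_eq_one
    rw [hfacB, mul_pow, pow_mul, hni4, one_pow, one_mul, mul_comm 4 e, pow_mul,
      pow_orderOf_eq_one, one_pow]
  have hcomp := aux_comp e d he0 hd0 hEd hDe
  -- characterization of periodic points
  have hmulone : ∀ c u : ZMod p, c * u = u ↔ c = 1 ∨ u = 0 := by
    intro c u
    constructor
    · intro h
      have : (c - 1) * u = 0 := by linear_combination h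
      rcases mul_eq_zero.mp this with h' | h'
      · exact Or.inl (by linear_combination h')
      · exact Or.inr h'
    · rintro (rfl | rfl) <;> simp
  have hchar : ∀ (x : ZMod p × ZMod p) (n : ℕ),
      Function.IsPeriodicPt (subAddStep p) n x ↔
      (((1 + i) ^ n = 1 ∨ x.1 + i * x.2 = 0) ∧ ((1 - i) ^ n = 1 ∨ x.1 - i * x.2 = 0)) := by
    intro x n
    have ha := subAdd_iter_add i hi x n
    have hb := subAdd_iter_sub i hi x n
    rw [← hmulone ((1 + i) ^ n), ← hmulone ((1 - i) ^ n)]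
    constructor
    · intro h
      have h' : (subAddStep p)^[n] x = x := h
      rw [h'] at ha hb
      exact ⟨ha.symm, hb.symm⟩
    · rintro ⟨h1, h2⟩
      rw [h1] at ha; rw [h2] at hb
      have e1 : 2 * ((subAddStep p)^[n] x).1 = 2 * x.1 := by linear_combination ha + hb
      have e2 : 2 * i * ((subAddStep p)^[n] x).2 = 2 * i * x.2 := by linear_combination ha - hb
      have c1 := mul_left_cancel₀ htwo e1
      have c2 := mul_left_cancel₀ (mul_ne_zero htwo hi0) e2
      show (subAddStep p)^[n] x = x
      exact Prod.ext c1 c2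
  have hper : ∀ (x : ZMod p × ZMod p) (L : ℕ),
      (∀ n, Function.IsPeriodicPt (subAddStep p) n x ↔ L ∣ n) →
      Function.minimalPeriod (subAddStep p) x = L := by
    intro x L h
    exact Nat.dvd_antisymm (((h L).mpr dvd_rfl).minimalPeriod_dvd)
      ((h _).mp (Function.isPeriodicPt_minimalPeriod _ _))
  have he1 : e ≠ 1 := by
    rw [hedef, Ne, orderOf_eq_one_iff]
    intro h; exact hi0 (by linear_combination h)
  have hd1 : d ≠ 1 := by
    rw [hddef, Ne, orderOf_eq_one_iff]
    intro h; exact hi0 (by linear_combination -h)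
  have main : ∀ x : ZMod p × ZMod p, x ≠ (0, 0) →
      Function.minimalPeriod (subAddStep p) x = e ∨
      Function.minimalPeriod (subAddStep p) x = d := by
    intro x hx
    have hx' : ¬(x.1 + i * x.2 = 0 ∧ x.1 - i * x.2 = 0) := by
      rintro ⟨hu, hv⟩
      apply hx
      have h1 : 2 * x.1 = 0 := by linear_combination hu + hv
      have h2 : 2 * i * x.2 = 0 := by linear_combination hu - hv
      have c1 : x.1 = 0 := by
        rcases mul_eq_zero.mp h1 with h | h
        · exact absurd h htwo
        · exact h
      have c2 : x.2 = 0 := by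
        rcases mul_eq_zero.mp h2 with h | h
        · exact absurd h (mul_ne_zero htwo hi0)
        · exact h
      exact Prod.ext c1 c2
    by_cases hu : x.1 + i * x.2 = 0
    · -- u = 0, v ≠ 0 : period d
      have hv : x.1 - i * x.2 ≠ 0 := fun hv => hx' ⟨hu, hv⟩
      right
      apply hper
      intro n
      rw [hchar]
      constructor
      · rintro ⟨_, h2' | h2'⟩
        · exact orderOf_dvd_of_pow_eq_one h2'
        · exact absurd h2' hv
      · intro hn
        exact ⟨Or.inr hu, Or.inl (orderOf_dvd_iff_pow_eq_one.mp hn)⟩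
    · by_cases hv : x.1 - i * x.2 = 0
      · -- v = 0, u ≠ 0 : period e
        left
        apply hper
        intro n
        rw [hchar]
        constructor
        · rintro ⟨h1' | h1', _⟩
          · exact orderOf_dvd_of_pow_eq_one h1'
          · exact absurd h1' hu
        · intro hn
          exact ⟨Or.inl (orderOf_dvd_iff_pow_eq_one.mp hn), Or.inr hv⟩
      · -- both nonzero : period lcm e d which is e or d
        have hlcm : Function.minimalPeriod (subAddStep p) x = Nat.lcm e d := by
          apply hper
          intro n
          rw [hchar, Nat.lcm_dvd_iff]
          constructor
          · rintro ⟨h1' | h1', h2' | h2'⟩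
            · exact ⟨orderOf_dvd_of_pow_eq_one h1', orderOf_dvd_of_pow_eq_one h2'⟩
            · exact absurd h2' hv
            · exact absurd h1' hu
            · exact absurd h1' hu
          · rintro ⟨hne, hnd⟩
            exact ⟨Or.inl (orderOf_dvd_iff_pow_eq_one.mp hne),
              Or.inl (orderOf_dvd_iff_pow_eq_one.mp hnd)⟩
        rcases hcomp with h | h
        · right; rw [hlcm]
          exact Nat.dvd_antisymm (Nat.lcm_dvd h dvd_rfl) (Nat.dvd_lcm_right e d)
        · left; rw [hlcm]
          exact Nat.dvd_antisymm (Nat.lcm_dvd dvd_rfl h) (Nat.dvd_lcm_left e d)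
  refine ⟨main, fun x => ?_⟩
  constructor
  · intro h1
    by_contra hx
    rcases main x hx with h | h <;> rw [h1] at h
    · exact he1 h.symm
    · exact hd1 h.symm
  · rintro rfl
    rw [Function.minimalPeriod_eq_one_iff_isFixedPt]
    show subAddStep p (0, 0) = (0, 0)
    simp [subAddStep]
end

section
/- Let p be a prime with p ≡ 3 (mod 4), let M be the sub-add matrix acting on (ℤ/pℤ)² by (a,b) ↦ (a−b, a+b), and let k be the ℤ_p-order of M. Then every nonzero vertex x ∈ (ℤ/pℤ)² has minimal period under M exactly equal to k; equivalently, every directed cycle in Γ_{M,p} has length 1 or k, and the only vertex of minimal period 1 is (0,0). -/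
/-- The iterates of `subAddStep` are determined by the orbit of `(1,0)`: they act as
multiplication by `c + d·i` in the “Gaussian” sense. -/
lemma subAddStep_iter_eq (n : ℕ) (ℓ : ℕ) (v : ZMod n × ZMod n) :
    (subAddStep n)^[ℓ] v =
      (((subAddStep n)^[ℓ] (1, 0)).1 * v.1 - ((subAddStep n)^[ℓ] (1, 0)).2 * v.2,
       ((subAddStep n)^[ℓ] (1, 0)).2 * v.1 + ((subAddStep n)^[ℓ] (1, 0)).1 * v.2) := by
  induction ℓ with
  | zero => simp
  | succ m ih =>
    rw [Function.iterate_succ_apply', Function.iterate_succ_apply', ih,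
      subAddStep, subAddStep]
    simp only [Prod.mk.injEq]
    constructor <;> ring

lemma sq_add_sq_eq_zero (p : ℕ) [Fact p.Prime] (hp4 : p % 4 = 3)
    (a b : ZMod p) (h : a * a + b * b = 0) : a = 0 ∧ b = 0 := by
  have hns : ¬ IsSquare (-1 : ZMod p) := by
    rw [ZMod.exists_sq_eq_neg_one_iff]
    simp [hp4]
  have hb : b = 0 := by
    by_contra hb
    apply hns
    refine ⟨a * b⁻¹, ?_⟩
    have h2 : a * a = -(b * b) := by linear_combination h
    field_simp
    linear_combination -h
  constructor
  · have : a * a = 0 := by simpa [hb] using h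
    exact mul_self_eq_zero.mp this
  · exact hb

/-- for a prime `p ≡ 3 (mod 4)`, with `k` the `ℤ_p`-order of the sub-add
matrix (least positive `k` with `M^k x = x` for all `x`), every nonzero vertex of
`(ℤ/pℤ)²` has minimal period exactly `k`; equivalently every directed cycle of `Γ_{M,p}`
has length `1` or `k`, and the only vertex of minimal period `1` is `(0,0)`. -/
theorem stmt15 (p k : ℕ) (hp : p.Prime) (hp4 : p % 4 = 3)
    (hk : 0 < k) (hfix : ∀ x : ZMod p × ZMod p, (subAddStep p)^[k] x = x)
    (hmin : ∀ j, 0 < j → (∀ x : ZMod p × ZMod p, (subAddStep p)^[j] x = x) → k ≤ j) :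
    (∀ x : ZMod p × ZMod p, x ≠ (0, 0) →
      Function.minimalPeriod (subAddStep p) x = k) ∧
    (∀ x : ZMod p × ZMod p,
      Function.minimalPeriod (subAddStep p) x = 1 ↔ x = (0, 0)) := by
  haveI : Fact p.Prime := ⟨hp⟩
  -- key: if some positive iterate fixes a nonzero point, it fixes everything
  have key : ∀ ℓ : ℕ, ∀ x : ZMod p × ZMod p, x ≠ (0, 0) →
      (subAddStep p)^[ℓ] x = x → ∀ y, (subAddStep p)^[ℓ] y = y := by
    intro ℓ x hx hℓ y
    set c := ((subAddStep p)^[ℓ] (1, 0)).1 with hc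
    set d := ((subAddStep p)^[ℓ] (1, 0)).2 with hd
    have hx1 : c * x.1 - d * x.2 = x.1 := by
      have := subAddStep_iter_eq p ℓ x
      rw [hℓ] at this
      exact (congrArg Prod.fst this).symm
    have hx2 : d * x.1 + c * x.2 = x.2 := by
      have := subAddStep_iter_eq p ℓ x
      rw [hℓ] at this
      exact (congrArg Prod.snd this).symm
    have hsum : ((c - 1) * (c - 1) + d * d) * x.1 = 0 := by
      linear_combination (c - 1) * hx1 + d * hx2 - (c - 1) * x.1 - d * x.2
    have hsum2 : ((c - 1) * (c - 1) + d * d) * x.2 = 0 := by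
      linear_combination (c - 1) * hx2 - d * hx1 + d * x.1 - (c - 1) * x.2
    have hcd : (c - 1) * (c - 1) + d * d = 0 := by
      by_contra h
      apply hx
      have h1 : x.1 = 0 := by
        rcases mul_eq_zero.mp hsum with h' | h'
        · exact absurd h' h
        · exact h'
      have h2 : x.2 = 0 := by
        rcases mul_eq_zero.mp hsum2 with h' | h'
        · exact absurd h' h
        · exact h'
      exact Prod.ext h1 h2
    obtain ⟨hc1, hd0⟩ := sq_add_sq_eq_zero p hp4 _ _ hcd
    have hc' : c = 1 := by linear_combination hc1
    have := subAddStep_iter_eq p ℓ y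
    rw [← hc, ← hd, hc', hd0] at this
    simpa using this
  have hk1 : k ≠ 1 := by
    intro h1
    have := hfix (1, 0)
    rw [h1] at this
    simp only [Function.iterate_one, subAddStep] at this
    have : (1 : ZMod p) - 0 = 1 ∧ (1 : ZMod p) + 0 = 0 := by
      constructor
      · exact congrArg Prod.fst this
      · exact congrArg Prod.snd this
    simp at this
  have main : ∀ x : ZMod p × ZMod p, x ≠ (0, 0) →
      Function.minimalPeriod (subAddStep p) x = k := by
    intro x hx
    have hper : Function.IsPeriodicPt (subAddStep p) k x := hfix x
    have hle : Function.minimalPeriod (subAddStep p) x ≤ k :=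
      hper.minimalPeriod_le hk
    have hpos : 0 < Function.minimalPeriod (subAddStep p) x :=
      hper.minimalPeriod_pos hk
    have hmp : (subAddStep p)^[Function.minimalPeriod (subAddStep p) x] x = x :=
      Function.isPeriodicPt_minimalPeriod _ _
    have hge : k ≤ Function.minimalPeriod (subAddStep p) x :=
      hmin _ hpos (key _ x hx hmp)
    omega
  refine ⟨main, fun x => ⟨?_, ?_⟩⟩
  · intro h1
    by_contra hx
    rw [main x hx] at h1
    exact hk1 h1
  · rintro rfl
    rw [Function.minimalPeriod_eq_one_iff_isFixedPt]
    show subAddStep p (0, 0) = (0, 0)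
    simp [subAddStep]
end

section
/- Let p be an odd prime, let M be the sub-add matrix, let t be the multiplicative order of −4 in (ℤ/pℤ)^×, and let k be the ℤ_p-order of M. (a) If t is even, then Γ_{M,p} has no secondary cycles. Now suppose t is odd (in which case p ≡ 1 (mod 4)), and fix i ∈ ℤ/pℤ with i² = −1. (b) If t ≡ 1 (mod 4) and (1+i)^t = i, then every secondary cycle of Γ_{M,p} has length t. (c) If t ≡ 3 (mod 4) and (1+i)^t = i, then every secondary cycle has length 2t. (d) If t ≡ 1 (mod 4) and (1+i)^t = −i, then every secondary cycle has length 2t. (e) If t ≡ 3 (mod 4) and (1+i)^t = −i, then every secondary cycle has length t. -/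
section Aux
variable {p : ℕ} [Fact p.Prime] {i : ZMod p}

lemma saux_iter (hi : i ^ 2 = -1) (n : ℕ) (x : ZMod p × ZMod p) :
    ((subAddStep p)^[n] x).1 + i * ((subAddStep p)^[n] x).2
        = (1 + i) ^ n * (x.1 + i * x.2) ∧
    ((subAddStep p)^[n] x).1 - i * ((subAddStep p)^[n] x).2
        = (1 - i) ^ n * (x.1 - i * x.2) := by
  induction n generalizing x with
  | zero => simp
  | succ n ih =>
    rw [Function.iterate_succ_apply]
    obtain ⟨h1, h2⟩ := ih (subAddStep p x)
    constructor
    · rw [h1]; simp only [subAddStep]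
      linear_combination (-(1 + i)^n * x.2) * hi
    · rw [h2]; simp only [subAddStep]
      linear_combination (-(1 - i)^n * x.2) * hi

lemma saux_fix_iff (hi : i ^ 2 = -1) (hp2 : (2 : ZMod p) ≠ 0) (hi0 : i ≠ 0)
    (n : ℕ) (x : ZMod p × ZMod p) :
    (subAddStep p)^[n] x = x ↔
      (1 + i) ^ n * (x.1 + i * x.2) = x.1 + i * x.2 ∧
      (1 - i) ^ n * (x.1 - i * x.2) = x.1 - i * x.2 := by
  obtain ⟨h1, h2⟩ := saux_iter hi n x
  constructor
  · intro h; rw [h] at h1 h2; exact ⟨h1.symm, h2.symm⟩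
  · rintro ⟨e1, e2⟩
    rw [← h1] at e1; rw [← h2] at e2
    set y := (subAddStep p)^[n] x with hy
    have hfst : y.1 = x.1 := by
      have : 2 * y.1 = 2 * x.1 := by linear_combination e1 + e2
      exact mul_left_cancel₀ hp2 this
    have hsnd : y.2 = x.2 := by
      have : 2 * (i * y.2) = 2 * (i * x.2) := by linear_combination e1 - e2
      exact mul_left_cancel₀ hi0 (mul_left_cancel₀ hp2 this)
    exact Prod.ext hfst hsnd
end Aux

section Aux2
variable {p : ℕ} [Fact p.Prime] {i : ZMod p}

lemma saux_key (hp2 : (2 : ZMod p) ≠ 0) (hi : i ^ 2 = -1)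
    {k : ℕ} (hk : 0 < k)
    (hfix : ∀ x : ZMod p × ZMod p, (subAddStep p)^[k] x = x)
    (hmin : ∀ j, 0 < j → (∀ x : ZMod p × ZMod p, (subAddStep p)^[j] x = x) → k ≤ j) :
    k = Nat.lcm (orderOf (1 + i : ZMod p)) (orderOf (1 - i : ZMod p)) ∧
    ∀ x : ZMod p × ZMod p,
      Function.minimalPeriod (subAddStep p) x = 1 ∨
      Function.minimalPeriod (subAddStep p) x = orderOf (1 + i : ZMod p) ∨
      Function.minimalPeriod (subAddStep p) x = orderOf (1 - i : ZMod p) ∨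
      Function.minimalPeriod (subAddStep p) x = k := by
  have hi0 : i ≠ 0 := by
    intro h; rw [h] at hi
    exact one_ne_zero (α := ZMod p) (by linear_combination hi)
  have hα0 : (1 + i : ZMod p) ≠ 0 := by
    intro h
    have : i = -1 := by linear_combination h
    rw [this] at hi; exact hp2 (by linear_combination hi)
  have hβ0 : (1 - i : ZMod p) ≠ 0 := by
    intro h
    have : i = 1 := by linear_combination -h
    rw [this] at hi; exact hp2 (by linear_combination hi)
  set α := (1 + i : ZMod p) with hαdef
  set β := (1 - i : ZMod p) with hβdef
  have hpord : ∀ a : ZMod p, a ≠ 0 → IsOfFinOrder a := by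
    intro a ha
    refine isOfFinOrder_iff_pow_eq_one.2 ⟨p - 1, ?_, ZMod.pow_card_sub_one_eq_one ha⟩
    have := (Fact.out : p.Prime).one_lt; omega
  have hd : 0 < orderOf α := (hpord α hα0).orderOf_pos
  have hd' : 0 < orderOf β := (hpord β hβ0).orderOf_pos
  -- k = lcm
  have hdk : orderOf α ∣ k := by
    have h := (saux_fix_iff hi hp2 hi0 k (2⁻¹, -(i * 2⁻¹))).1 (hfix _)
    simp only at h
    have hu : (2⁻¹ : ZMod p) + i * -(i * 2⁻¹) = 1 := by
      have h2 : (2 : ZMod p) * 2⁻¹ = 1 := mul_inv_cancel₀ hp2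
      linear_combination h2 - 2⁻¹ * hi
    rw [hu] at h
    exact orderOf_dvd_iff_pow_eq_one.2 (by simpa using h.1)
  have hd'k : orderOf β ∣ k := by
    have h := (saux_fix_iff hi hp2 hi0 k (2⁻¹, i * 2⁻¹)).1 (hfix _)
    simp only at h
    have hv : (2⁻¹ : ZMod p) - i * (i * 2⁻¹) = 1 := by
      have h2 : (2 : ZMod p) * 2⁻¹ = 1 := mul_inv_cancel₀ hp2
      linear_combination h2 - 2⁻¹ * hi
    rw [hv] at h
    exact orderOf_dvd_iff_pow_eq_one.2 (by simpa using h.2)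
  have hlcmfix : ∀ x : ZMod p × ZMod p,
      (subAddStep p)^[Nat.lcm (orderOf α) (orderOf β)] x = x := by
    intro x
    refine (saux_fix_iff hi hp2 hi0 _ x).2 ⟨?_, ?_⟩
    · rw [orderOf_dvd_iff_pow_eq_one.1 (Nat.dvd_lcm_left _ _), one_mul]
    · rw [orderOf_dvd_iff_pow_eq_one.1 (Nat.dvd_lcm_right _ _), one_mul]
  have hklcm : k = Nat.lcm (orderOf α) (orderOf β) := by
    have h1 : Nat.lcm (orderOf α) (orderOf β) ∣ k := Nat.lcm_dvd hdk hd'k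
    have h2 : k ≤ Nat.lcm (orderOf α) (orderOf β) :=
      hmin _ (Nat.pos_of_ne_zero (Nat.lcm_ne_zero hd.ne' hd'.ne')) hlcmfix
    exact le_antisymm h2 (Nat.le_of_dvd hk h1)
  refine ⟨hklcm, fun x => ?_⟩
  set m := Function.minimalPeriod (subAddStep p) x with hmdef
  have hper : Function.IsPeriodicPt (subAddStep p) k x := hfix x
  have hmpos : 0 < m := hper.minimalPeriod_pos hk
  have hmfix : (subAddStep p)^[m] x = x :=
    Function.isPeriodicPt_minimalPeriod (subAddStep p) x
  have hmdvdk : m ∣ k := hper.minimalPeriod_dvd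
  obtain ⟨e1, e2⟩ := (saux_fix_iff hi hp2 hi0 m x).1 hmfix
  by_cases hu : x.1 + i * x.2 = 0
  · by_cases hv : x.1 - i * x.2 = 0
    · -- x = 0
      left
      have hx1 : x.1 = 0 := by
        have : 2 * x.1 = 0 := by linear_combination hu + hv
        exact (mul_eq_zero.1 this).resolve_left hp2
      have hx2 : x.2 = 0 := by
        have : 2 * (i * x.2) = 0 := by linear_combination hu - hv
        rcases mul_eq_zero.1 this with h | h
        · exact absurd h hp2
        · exact (mul_eq_zero.1 h).resolve_left hi0
      refine Function.minimalPeriod_eq_one_iff_isFixedPt.2 ?_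
      show subAddStep p x = x
      have : x = (0, 0) := Prod.ext hx1 hx2
      rw [this]; simp [subAddStep]
    · -- u = 0, v ≠ 0 : m = orderOf β
      right; right; left
      have h1 : orderOf β ∣ m :=
        orderOf_dvd_iff_pow_eq_one.2 (mul_right_cancel₀ hv (by rw [e2, one_mul]))
      have h2 : (subAddStep p)^[orderOf β] x = x := by
        refine (saux_fix_iff hi hp2 hi0 _ x).2 ⟨?_, ?_⟩
        · rw [hu, mul_zero]
        · rw [pow_orderOf_eq_one, one_mul]
      exact Nat.dvd_antisymm (Function.IsPeriodicPt.minimalPeriod_dvd h2) h1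
  · by_cases hv : x.1 - i * x.2 = 0
    · right; left
      have h1 : orderOf α ∣ m :=
        orderOf_dvd_iff_pow_eq_one.2 (mul_right_cancel₀ hu (by rw [e1, one_mul]))
      have h2 : (subAddStep p)^[orderOf α] x = x := by
        refine (saux_fix_iff hi hp2 hi0 _ x).2 ⟨?_, ?_⟩
        · rw [pow_orderOf_eq_one, one_mul]
        · rw [hv, mul_zero]
      exact Nat.dvd_antisymm (Function.IsPeriodicPt.minimalPeriod_dvd h2) h1
    · right; right; right
      have h1 : orderOf α ∣ m :=
        orderOf_dvd_iff_pow_eq_one.2 (mul_right_cancel₀ hu (by rw [e1, one_mul]))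
      have h2 : orderOf β ∣ m :=
        orderOf_dvd_iff_pow_eq_one.2 (mul_right_cancel₀ hv (by rw [e2, one_mul]))
      have : k ∣ m := hklcm ▸ Nat.lcm_dvd h1 h2
      exact Nat.dvd_antisymm hmdvdk this

end Aux2

section Aux3
variable {p : ℕ} [Fact p.Prime] {t : ℕ} {a : ZMod p}

lemma saux_gcd (hp2 : (2 : ZMod p) ≠ 0) (ht : t = orderOf (-4 : ZMod p))
    (ha : a ≠ 0) (ha4 : a ^ 4 = -4) :
    0 < t ∧ 0 < orderOf a ∧ orderOf a = t * Nat.gcd (orderOf a) 4 ∧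
      (Nat.gcd (orderOf a) 4 = 1 ∨ Nat.gcd (orderOf a) 4 = 2 ∨
        Nat.gcd (orderOf a) 4 = 4) := by
  have hpord : ∀ c : ZMod p, c ≠ 0 → IsOfFinOrder c := by
    intro c hc
    refine isOfFinOrder_iff_pow_eq_one.2 ⟨p - 1, ?_, ZMod.pow_card_sub_one_eq_one hc⟩
    have := (Fact.out : p.Prime).one_lt; omega
  have h4ne : (-4 : ZMod p) ≠ 0 := by
    intro h
    have h22 : (2 : ZMod p) * 2 = 0 := by linear_combination -h
    rcases mul_eq_zero.1 h22 with h | h <;> exact hp2 h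
  have htpos : 0 < t := ht ▸ (hpord _ h4ne).orderOf_pos
  have hdpos : 0 < orderOf a := (hpord a ha).orderOf_pos
  have hrep : orderOf a = t * Nat.gcd (orderOf a) 4 := by
    have h := orderOf_pow' a (n := 4) (by norm_num)
    rw [ha4] at h
    rw [ht, h, Nat.div_mul_cancel (Nat.gcd_dvd_left _ _)]
  refine ⟨htpos, hdpos, hrep, ?_⟩
  have hmem : Nat.gcd (orderOf a) 4 ∈ Nat.divisors 4 :=
    Nat.mem_divisors.2 ⟨Nat.gcd_dvd_right _ _, by norm_num⟩
  have h4 : Nat.divisors 4 = {1, 2, 4} := by decide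
  rw [h4] at hmem; simpa using hmem

lemma saux_ordeq_t (htpos : 0 < t)
    (hrep : orderOf a = t * Nat.gcd (orderOf a) 4)
    (hg : Nat.gcd (orderOf a) 4 = 1 ∨ Nat.gcd (orderOf a) 4 = 2 ∨
      Nat.gcd (orderOf a) 4 = 4)
    (h1 : a ^ t = 1) : orderOf a = t := by
  have hd : orderOf a ∣ t := orderOf_dvd_iff_pow_eq_one.2 h1
  have hle := Nat.le_of_dvd htpos hd
  rcases hg with h | h | h <;> rw [h] at hrep <;> omega

lemma saux_ordeq_2t (hm1 : (-1 : ZMod p) ≠ 1) (htpos : 0 < t)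
    (hrep : orderOf a = t * Nat.gcd (orderOf a) 4)
    (hg : Nat.gcd (orderOf a) 4 = 1 ∨ Nat.gcd (orderOf a) 4 = 2 ∨
      Nat.gcd (orderOf a) 4 = 4)
    (h1 : a ^ t = -1) : orderOf a = 2 * t := by
  have h2 : a ^ (2 * t) = 1 := by rw [mul_comm, pow_mul, h1, neg_one_sq]
  have hd : orderOf a ∣ 2 * t := orderOf_dvd_iff_pow_eq_one.2 h2
  have hle := Nat.le_of_dvd (by omega) hd
  have hnd : ¬ orderOf a ∣ t := by
    intro hdvd
    exact hm1 (by rw [← h1]; exact orderOf_dvd_iff_pow_eq_one.1 hdvd)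
  rcases hg with h | h | h <;> rw [h] at hrep
  · exact absurd (by rw [hrep]; exact ⟨1, by ring⟩) hnd
  · omega
  · omega

lemma saux_ordeq_4t (hm1 : (-1 : ZMod p) ≠ 1) (htpos : 0 < t)
    (hrep : orderOf a = t * Nat.gcd (orderOf a) 4)
    (hg : Nat.gcd (orderOf a) 4 = 1 ∨ Nat.gcd (orderOf a) 4 = 2 ∨
      Nat.gcd (orderOf a) 4 = 4)
    (h2 : a ^ (2 * t) = -1) : orderOf a = 4 * t := by
  have h4 : a ^ (4 * t) = 1 := by
    rw [show 4 * t = 2 * t * 2 by ring, pow_mul, h2, neg_one_sq]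
  have hd : orderOf a ∣ 4 * t := orderOf_dvd_iff_pow_eq_one.2 h4
  have hnd : ¬ orderOf a ∣ 2 * t := by
    intro hdvd
    exact hm1 (by rw [← h2]; exact orderOf_dvd_iff_pow_eq_one.1 hdvd)
  rcases hg with h | h | h <;> rw [h] at hrep
  · exact absurd (by rw [hrep]; exact ⟨2, by ring⟩) hnd
  · exact absurd (by rw [hrep]; exact ⟨1, by ring⟩) hnd
  · omega

lemma saux_four_dvd (hteven : Even t) (htpos : 0 < t)
    (hrep : orderOf a = t * Nat.gcd (orderOf a) 4)
    (hg : Nat.gcd (orderOf a) 4 = 1 ∨ Nat.gcd (orderOf a) 4 = 2 ∨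
      Nat.gcd (orderOf a) 4 = 4) : 4 ∣ orderOf a := by
  obtain ⟨s, hs⟩ := hteven
  rcases hg with h | h | h
  · exfalso
    have h2d : 2 ∣ orderOf a := by rw [hrep, h]; omega
    have := Nat.dvd_gcd h2d (by norm_num : (2 : ℕ) ∣ 4)
    rw [h] at this; omega
  · exfalso
    have h4d : 4 ∣ orderOf a := by rw [hrep, h]; exact ⟨s, by omega⟩
    have := Nat.dvd_gcd h4d (dvd_refl 4)
    rw [h] at this
    have := Nat.le_of_dvd (by norm_num) this; omega
  · exact h ▸ Nat.gcd_dvd_left _ _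

end Aux3

lemma saux_rep (p : ℕ) : ∀ n : ℕ, ∃ a b : ZMod p, ∀ x : ZMod p × ZMod p,
    (subAddStep p)^[n] x = (a * x.1 + b * (x.1 - x.2), a * x.2 + b * (x.1 + x.2)) := by
  intro n
  induction n with
  | zero => exact ⟨1, 0, fun x => by simp⟩
  | succ n ih =>
    obtain ⟨a, b, hab⟩ := ih
    refine ⟨-2 * b, a + 2 * b, fun x => ?_⟩
    rw [Function.iterate_succ_apply', hab x]
    simp only [subAddStep, Prod.mk.injEq]
    constructor <;> ring

section Aux4
variable {p : ℕ} [Fact p.Prime] {i : ZMod p}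

lemma saux_pow_mod {c : ZMod p} (hc : c ^ 4 = 1) {s r : ℕ} (hr : s % 4 = r) :
    c ^ s = c ^ r := by
  conv_lhs => rw [← Nat.div_add_mod s 4]
  rw [pow_add, pow_mul, hc, one_pow, one_mul, hr]

lemma saux_basics (hp2 : (2 : ZMod p) ≠ 0) (hi : i ^ 2 = -1) :
    (1 + i : ZMod p) ≠ 0 ∧ (1 - i : ZMod p) ≠ 0 ∧
    (1 + i : ZMod p) ^ 4 = -4 ∧ (1 - i : ZMod p) ^ 4 = -4 ∧
    (1 - i : ZMod p) = -i * (1 + i) ∧ (1 + i : ZMod p) = i * (1 - i) ∧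
    (-i : ZMod p) ^ 4 = 1 ∧ (-i : ZMod p) ^ 3 = i := by
  refine ⟨?_, ?_, ?_, ?_, ?_, ?_, ?_, ?_⟩
  · intro h
    have h' : i = -1 := by linear_combination h
    rw [h'] at hi; exact hp2 (by linear_combination hi)
  · intro h
    have h' : i = 1 := by linear_combination -h
    rw [h'] at hi; exact hp2 (by linear_combination hi)
  · linear_combination (i ^ 2 + 4 * i + 5) * hi
  · linear_combination (i ^ 2 - 4 * i + 5) * hi
  · linear_combination hi
  · linear_combination hi
  · linear_combination (i ^ 2 - 1) * hi
  · linear_combination (-i) * hi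

end Aux4

lemma saux_secondary {p k t : ℕ} [Fact p.Prime] {i : ZMod p}
    (hp2 : (2 : ZMod p) ≠ 0) (ht : t = orderOf (-4 : ZMod p)) (hk : 0 < k)
    (hfix : ∀ x : ZMod p × ZMod p, (subAddStep p)^[k] x = x)
    (hmin : ∀ j, 0 < j → (∀ x : ZMod p × ZMod p, (subAddStep p)^[j] x = x) → k ≤ j)
    (hi : i ^ 2 = -1) (hα2t : (1 + i : ZMod p) ^ (2 * t) = -1)
    {d' : ℕ} (hβord : orderOf (1 - i : ZMod p) = d') (hd'dvd : d' ∣ 4 * t) :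
    ∀ x : ZMod p × ZMod p,
      Function.minimalPeriod (subAddStep p) x ≠ 1 →
      Function.minimalPeriod (subAddStep p) x ≠ k →
      Function.minimalPeriod (subAddStep p) x = d' := by
  obtain ⟨hα0, hβ0, hα4, hβ4, hβα, hαβ, hni4, hni3⟩ := saux_basics hp2 hi
  have hm1 : (-1 : ZMod p) ≠ 1 := by
    intro h; exact hp2 (by linear_combination -h)
  obtain ⟨htpos, hdApos, hrepA, hgA⟩ := saux_gcd hp2 ht hα0 hα4
  have hdA : orderOf (1 + i : ZMod p) = 4 * t := saux_ordeq_4t hm1 htpos hrepA hgA hα2t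
  obtain ⟨hklcm, hclass⟩ := saux_key hp2 hi hk hfix hmin
  have hk4t : k = 4 * t := by
    rw [hklcm, hdA, hβord]
    exact Nat.dvd_antisymm (Nat.lcm_dvd dvd_rfl hd'dvd) (Nat.dvd_lcm_left _ _)
  intro x hx1 hxk
  rcases hclass x with h | h | h | h
  · exact absurd h hx1
  · exact absurd (h.trans (hdA.trans hk4t.symm)) hxk
  · exact h.trans hβord
  · exact absurd h hxk


/-- let `p` be an odd prime, `t = ord(-4)` in `(ℤ/pℤ)ˣ` and `k` the
`ℤ_p`-order of the sub-add matrix.  A secondary cycle is a directed cycle whose length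
(= minimal period of its vertices) is neither `1` nor `k`.
(a) If `t` is even, `Γ_{M,p}` has no secondary cycles.  If `i² = -1` in `ℤ/pℤ`:
(b) if `t ≡ 1 (mod 4)` and `(1+i)^t = i`, all secondary cycles have length `t`;
(c) if `t ≡ 3 (mod 4)` and `(1+i)^t = i`, all secondary cycles have length `2t`;
(d) if `t ≡ 1 (mod 4)` and `(1+i)^t = -i`, all secondary cycles have length `2t`;
(e) if `t ≡ 3 (mod 4)` and `(1+i)^t = -i`, all secondary cycles have length `t`. -/
theorem stmt16 (p k t : ℕ) (hp : p.Prime) (hpodd : p ≠ 2)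
    (ht : t = orderOf (-4 : ZMod p))
    (hk : 0 < k) (hfix : ∀ x : ZMod p × ZMod p, (subAddStep p)^[k] x = x)
    (hmin : ∀ j, 0 < j → (∀ x : ZMod p × ZMod p, (subAddStep p)^[j] x = x) → k ≤ j) :
    (Even t → ∀ x : ZMod p × ZMod p,
      Function.minimalPeriod (subAddStep p) x ≠ 1 →
      Function.minimalPeriod (subAddStep p) x = k) ∧
    (∀ i : ZMod p, i ^ 2 = -1 →
      ((t % 4 = 1 ∧ (1 + i) ^ t = i) → ∀ x : ZMod p × ZMod p,
        Function.minimalPeriod (subAddStep p) x ≠ 1 →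
        Function.minimalPeriod (subAddStep p) x ≠ k →
        Function.minimalPeriod (subAddStep p) x = t) ∧
      ((t % 4 = 3 ∧ (1 + i) ^ t = i) → ∀ x : ZMod p × ZMod p,
        Function.minimalPeriod (subAddStep p) x ≠ 1 →
        Function.minimalPeriod (subAddStep p) x ≠ k →
        Function.minimalPeriod (subAddStep p) x = 2 * t) ∧
      ((t % 4 = 1 ∧ (1 + i) ^ t = -i) → ∀ x : ZMod p × ZMod p,
        Function.minimalPeriod (subAddStep p) x ≠ 1 →
        Function.minimalPeriod (subAddStep p) x ≠ k →
        Function.minimalPeriod (subAddStep p) x = 2 * t) ∧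
      ((t % 4 = 3 ∧ (1 + i) ^ t = -i) → ∀ x : ZMod p × ZMod p,
        Function.minimalPeriod (subAddStep p) x ≠ 1 →
        Function.minimalPeriod (subAddStep p) x ≠ k →
        Function.minimalPeriod (subAddStep p) x = t)) := by
  haveI : Fact p.Prime := ⟨hp⟩
  have hp2 : (2 : ZMod p) ≠ 0 := by
    intro h
    have h2 : ((2 : ℕ) : ZMod p) = 0 := by push_cast; exact h
    have := (ZMod.natCast_eq_zero_iff 2 p).1 h2
    exact hpodd ((Nat.prime_dvd_prime_iff_eq hp Nat.prime_two).1 this)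
  have hm1 : (-1 : ZMod p) ≠ 1 := by
    intro h; exact hp2 (by linear_combination -h)
  constructor
  · -- part (a)
    intro hteven x hx1
    by_cases hex : ∃ c : ZMod p, c ^ 2 = -1
    · obtain ⟨i, hi⟩ := hex
      obtain ⟨hα0, hβ0, hα4, hβ4, hβα, hαβ, hni4, hi4⟩ := saux_basics hp2 hi
      have hi4' : (i : ZMod p) ^ 4 = 1 := by linear_combination (i ^ 2 - 1) * hi
      obtain ⟨htpos, hdApos, hrepA, hgA⟩ := saux_gcd hp2 ht hα0 hα4
      obtain ⟨-, hdBpos, hrepB, hgB⟩ := saux_gcd hp2 ht hβ0 hβ4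
      have h4dA : 4 ∣ orderOf (1 + i : ZMod p) := saux_four_dvd hteven htpos hrepA hgA
      have h4dB : 4 ∣ orderOf (1 - i : ZMod p) := saux_four_dvd hteven htpos hrepB hgB
      have hBA : orderOf (1 - i : ZMod p) ∣ orderOf (1 + i : ZMod p) := by
        refine orderOf_dvd_iff_pow_eq_one.2 ?_
        obtain ⟨q, hq⟩ := h4dA
        rw [hβα, mul_pow, pow_orderOf_eq_one, mul_one, hq, pow_mul, hni4, one_pow]
      have hAB : orderOf (1 + i : ZMod p) ∣ orderOf (1 - i : ZMod p) := by
        refine orderOf_dvd_iff_pow_eq_one.2 ?_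
        obtain ⟨q, hq⟩ := h4dB
        rw [hαβ, mul_pow, pow_orderOf_eq_one, mul_one, hq, pow_mul, hi4', one_pow]
      have hdd : orderOf (1 + i : ZMod p) = orderOf (1 - i : ZMod p) :=
        Nat.dvd_antisymm hAB hBA
      obtain ⟨hklcm, hclass⟩ := saux_key hp2 hi hk hfix hmin
      have hkd : k = orderOf (1 + i : ZMod p) := by
        rw [hklcm, hdd, Nat.lcm_self]
      rcases hclass x with h | h | h | h
      · exact absurd h hx1
      · exact h.trans hkd.symm
      · exact h.trans (hdd.symm.trans hkd.symm)
      · exact h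
    · -- no square root of -1
      push_neg at hex
      set m := Function.minimalPeriod (subAddStep p) x with hmdef
      have hper : Function.IsPeriodicPt (subAddStep p) k x := hfix x
      have hmpos : 0 < m := hper.minimalPeriod_pos hk
      have hmfix : (subAddStep p)^[m] x = x :=
        Function.isPeriodicPt_minimalPeriod (subAddStep p) x
      have hmdvdk : m ∣ k := hper.minimalPeriod_dvd
      have hxne : x ≠ (0, 0) := by
        intro h
        apply hx1
        rw [hmdef, h]
        exact Function.minimalPeriod_eq_one_iff_isFixedPt.2
          (show subAddStep p (0, 0) = (0, 0) by simp [subAddStep])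
      obtain ⟨a, b, hab⟩ := saux_rep p m
      have hx := (hab x).symm.trans hmfix
      have e1 : a * x.1 + b * (x.1 - x.2) = x.1 := congrArg Prod.fst hx
      have e2 : a * x.2 + b * (x.1 + x.2) = x.2 := congrArg Prod.snd hx
      have e1' : (a - 1 + b) * x.1 = b * x.2 := by linear_combination e1
      have e2' : (a - 1 + b) * x.2 = -(b * x.1) := by linear_combination e2
      have hsum : (a - 1 + b) ^ 2 + b ^ 2 = 0 := by
        by_cases h1 : x.1 = 0
        · have h2 : x.2 ≠ 0 := fun h2 => hxne (Prod.ext h1 h2)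
          have q : ((a - 1 + b) ^ 2 + b ^ 2) * x.2 = 0 := by
            linear_combination (a - 1 + b) * e2' - b * e1'
          exact (mul_eq_zero.1 q).resolve_right h2
        · have q : ((a - 1 + b) ^ 2 + b ^ 2) * x.1 = 0 := by
            linear_combination (a - 1 + b) * e1' + b * e2'
          exact (mul_eq_zero.1 q).resolve_right h1
      have hb : b = 0 := by
        by_contra hb
        apply hex ((a - 1 + b) * b⁻¹)
        have hbi : b * b⁻¹ = 1 := mul_inv_cancel₀ hb
        linear_combination b⁻¹ ^ 2 * hsum - (b * b⁻¹ + 1) * hbi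
      have ha : a = 1 := by
        have h0 : (a - 1) ^ 2 = 0 := by rw [hb] at hsum; linear_combination hsum
        have h1 : a - 1 = 0 := sq_eq_zero_iff.1 h0
        exact sub_eq_zero.1 h1
      have hall : ∀ y, (subAddStep p)^[m] y = y := by
        intro y; rw [hab y, ha, hb]; simp
      exact le_antisymm (Nat.le_of_dvd hk hmdvdk) (hmin m hmpos hall)
  · intro i hi
    obtain ⟨hα0, hβ0, hα4, hβ4, hβα, hαβ, hni4, hni3⟩ := saux_basics hp2 hi
    obtain ⟨htpos, hdApos, hrepA, hgA⟩ := saux_gcd hp2 ht hα0 hα4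
    obtain ⟨-, hdBpos, hrepB, hgB⟩ := saux_gcd hp2 ht hβ0 hβ4
    refine ⟨?_, ?_, ?_, ?_⟩
    · rintro ⟨h41, hαt⟩
      have hα2t : (1 + i : ZMod p) ^ (2 * t) = -1 := by
        rw [mul_comm, pow_mul, hαt]; linear_combination hi
      have hβt : (1 - i : ZMod p) ^ t = 1 := by
        rw [hβα, mul_pow, hαt, saux_pow_mod hni4 h41, pow_one]
        linear_combination -hi
      exact saux_secondary hp2 ht hk hfix hmin hi hα2t
        (saux_ordeq_t htpos hrepB hgB hβt) (dvd_mul_left t 4)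
    · rintro ⟨h43, hαt⟩
      have hα2t : (1 + i : ZMod p) ^ (2 * t) = -1 := by
        rw [mul_comm, pow_mul, hαt]; linear_combination hi
      have hβt : (1 - i : ZMod p) ^ t = -1 := by
        rw [hβα, mul_pow, hαt, saux_pow_mod hni4 h43, hni3]
        linear_combination hi
      exact saux_secondary hp2 ht hk hfix hmin hi hα2t
        (saux_ordeq_2t hm1 htpos hrepB hgB hβt) ⟨2, by ring⟩
    · rintro ⟨h41, hαt⟩
      have hα2t : (1 + i : ZMod p) ^ (2 * t) = -1 := by
        rw [mul_comm, pow_mul, hαt]; linear_combination hi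
      have hβt : (1 - i : ZMod p) ^ t = -1 := by
        rw [hβα, mul_pow, hαt, saux_pow_mod hni4 h41, pow_one]
        linear_combination hi
      exact saux_secondary hp2 ht hk hfix hmin hi hα2t
        (saux_ordeq_2t hm1 htpos hrepB hgB hβt) ⟨2, by ring⟩
    · rintro ⟨h43, hαt⟩
      have hα2t : (1 + i : ZMod p) ^ (2 * t) = -1 := by
        rw [mul_comm, pow_mul, hαt]; linear_combination hi
      have hβt : (1 - i : ZMod p) ^ t = 1 := by
        rw [hβα, mul_pow, hαt, saux_pow_mod hni4 h43, hni3]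
        linear_combination -hi
      exact saux_secondary hp2 ht hk hfix hmin hi hα2t
        (saux_ordeq_t htpos hrepB hgB hβt) (dvd_mul_left t 4)
end

section
/- Let p be an odd prime, let M be the sub-add matrix, and let k be the ℤ_p-order of M. Then Γ_{M,p} contains a secondary cycle — that is, there exists a vertex x ∈ (ℤ/pℤ)² whose minimal period under M is neither 1 nor k — if and only if 8 does not divide k. -/
/-!
Identifying `(a, b)` with `a + b i`, the sub-add map is multiplication by `1 + i` in
`𝔽_p[i] = 𝔽_p[X]/(X² + 1)`, and `1 - i = -i (1 + i)` with `(-i)² = -1`. Everything rests on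
one fact about orders in a domain of characteristic `≠ 2`: if `ζ² = -1` then
`ord (ζ x) = ord x` iff `8 ∣ ord x`.

If `-1` is not a square mod `p`, then `𝔽_p[i]` is a field, so every nonzero vertex has period
`k = ord (1 + i)` and there is no secondary cycle; and `8 ∣ k` because `1 - i`, the conjugate of
`1 + i`, has the same order.

If `i² = -1` in `𝔽_p`, the map is diagonal with eigenvalues `1 ± i`. The periods are then `1`,
`a = ord (1 + i)`, `b = ord (1 - i)` and `k = lcm a b`, so a secondary cycle exists iff `a ≠ b`,
i.e. iff `¬ 8 ∣ k`.
-/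

open Function

namespace Function

variable {α β : Type*} {f : α → α} {g : β → β}

theorem Semiconj.minimalPeriod_eq {e : α → β} (h : Semiconj e f g) (he : Injective e) (x : α) :
    minimalPeriod g (e x) = minimalPeriod f x := by
  refine minimalPeriod_eq_minimalPeriod_iff.mpr fun n => ?_
  simp only [IsPeriodicPt, IsFixedPt, ← (h.iterate_right n).eq, he.eq_iff]

theorem eq_minimalPeriod_of_forall_dvd {k : ℕ} (hk : 0 < k) (hfix : ∀ x, f^[k] x = x)
    (hmin : ∀ j, 0 < j → (∀ x, f^[j] x = x) → k ≤ j) {x₀ : α}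
    (hx₀ : ∀ x, minimalPeriod f x ∣ minimalPeriod f x₀) : k = minimalPeriod f x₀ := by
  have hdvd : minimalPeriod f x₀ ∣ k := IsPeriodicPt.minimalPeriod_dvd (hfix x₀)
  refine le_antisymm (hmin _ (Nat.pos_of_dvd_of_pos hdvd hk) fun x => ?_) (Nat.le_of_dvd hk hdvd)
  exact (isPeriodicPt_minimalPeriod f x).trans_dvd (hx₀ x)

end Function

section MulLeft

variable {M : Type*}

theorem minimalPeriod_mul_left_dvd_orderOf [Monoid M] (c z : M) :
    minimalPeriod (c * ·) z ∣ orderOf c :=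
  MulAction.period_dvd_orderOf c z

theorem minimalPeriod_mul_left_zero [MonoidWithZero M] (c : M) : minimalPeriod (c * ·) 0 = 1 :=
  minimalPeriod_eq_one_iff_isFixedPt.mpr (mul_zero c)

theorem minimalPeriod_mul_left_of_ne_zero [MonoidWithZero M] [IsRightCancelMulZero M] (c : M)
    {z : M} (hz : z ≠ 0) : minimalPeriod (c * ·) z = orderOf c := by
  refine minimalPeriod_eq_minimalPeriod_iff.mpr fun n => ?_
  simp only [IsPeriodicPt, IsFixedPt, mul_left_iterate, mul_one]
  exact ⟨fun h => mul_right_cancel₀ hz (h.trans (one_mul z).symm), fun h => by rw [h, one_mul]⟩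

theorem minimalPeriod_mul_left_eq_one_or [MonoidWithZero M] [IsRightCancelMulZero M] (c z : M) :
    minimalPeriod (c * ·) z = 1 ∨ minimalPeriod (c * ·) z = orderOf c := by
  rcases eq_or_ne z 0 with rfl | hz
  · exact .inl (minimalPeriod_mul_left_zero c)
  · exact .inr (minimalPeriod_mul_left_of_ne_zero c hz)

end MulLeft

theorem Nat.Prime.pow_dvd_or_pow_dvd_of_pow_dvd_lcm {q e a b : ℕ} (hq : q.Prime)
    (h : q ^ e ∣ Nat.lcm a b) : q ^ e ∣ a ∨ q ^ e ∣ b := by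
  rcases eq_or_ne a 0 with rfl | ha
  · exact .inl (dvd_zero _)
  rcases eq_or_ne b 0 with rfl | hb
  · exact .inr (dvd_zero _)
  simpa only [hq.pow_dvd_iff_le_factorization ha, hq.pow_dvd_iff_le_factorization hb,
    hq.pow_dvd_iff_le_factorization (Nat.lcm_ne_zero ha hb), Nat.factorization_lcm ha hb,
    Finsupp.sup_apply, le_sup_iff] using h

theorem Nat.eq_of_dvd_of_dvd_four_mul {m w : ℕ} (hw : 0 < w) (h1 : m ∣ 8 * w)
    (h2 : 8 * w ∣ 4 * m) (h3 : ¬ m ∣ 4 * w) : m = 8 * w := by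
  obtain ⟨d, hd⟩ := h2
  obtain rfl : m = 2 * w * d := by linarith
  have hd4 : d ∣ 4 :=
    Nat.dvd_of_mul_dvd_mul_left (by omega : 0 < 2 * w)
      (by rwa [show 8 * w = 2 * w * 4 by ring] at h1)
  have hd2 : ¬ d ∣ 2 := fun h =>
    h3 (by rw [show 4 * w = 2 * w * 2 by ring]; exact mul_dvd_mul_left _ h)
  have : d ≤ 4 := Nat.le_of_dvd (by norm_num) hd4
  interval_cases d <;> omega

section OrderOfMul

theorem orderOf_mul_eq_of_eight_dvd {G : Type*} [CommMonoid G] {ζ x : G} (hζ : ζ ^ 4 = 1)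
    (h8 : 8 ∣ orderOf x) : orderOf (ζ * x) = orderOf x := by
  have hpow : ∀ n, 4 ∣ n → (ζ * x) ^ n = x ^ n := by
    rintro _ ⟨m, rfl⟩
    rw [mul_pow, pow_mul, hζ, one_pow, one_mul]
  obtain ⟨w, hw⟩ := h8
  have h1 : orderOf (ζ * x) ∣ 8 * w := by
    rw [orderOf_dvd_iff_pow_eq_one, hpow _ ⟨2 * w, by ring⟩, ← hw, pow_orderOf_eq_one]
  have h2 : 8 * w ∣ 4 * orderOf (ζ * x) := by
    rw [← hw, orderOf_dvd_iff_pow_eq_one, ← hpow _ (dvd_mul_right 4 _), pow_mul',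
      pow_orderOf_eq_one, one_pow]
  rw [hw]
  rcases Nat.eq_zero_or_pos w with rfl | hw0
  · simpa using h2
  refine Nat.eq_of_dvd_of_dvd_four_mul hw0 h1 h2 ?_
  rw [orderOf_dvd_iff_pow_eq_one, hpow _ (dvd_mul_right 4 _), ← orderOf_dvd_iff_pow_eq_one, hw]
  exact fun h => absurd (Nat.le_of_dvd (by omega) h) (by omega)

variable {R : Type*} [CommRing R] [IsDomain R] {ζ x : R}

theorem eight_dvd_orderOf_of_orderOf_mul_eq (hζ : ζ ^ 2 = -1) (hR : (-1 : R) ≠ 1)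
    (h : orderOf (ζ * x) = orderOf x) : 8 ∣ orderOf x := by
  have hζn : ζ ^ orderOf x = 1 := by
    have := pow_orderOf_eq_one (ζ * x)
    rwa [h, mul_pow, pow_orderOf_eq_one, mul_one] at this
  have hζ4 : orderOf ζ = 4 :=
    orderOf_eq_prime_pow (p := 2) (n := 1) (by rw [pow_one, hζ]; exact hR)
      (by rw [show 2 ^ (1 + 1) = 2 * 2 from rfl, pow_mul, hζ]; norm_num)
  obtain ⟨u, hu⟩ : 4 ∣ orderOf x := hζ4 ▸ orderOf_dvd_of_pow_eq_one hζn
  rcases Nat.even_or_odd u with ⟨v, rfl⟩ | hodd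
  · exact ⟨v, by omega⟩
  exfalso
  have hu0 : u ≠ 0 := by rintro rfl; simp at hodd
  -- For odd `u`, both `x ^ (2 * u)` and `ζ ^ (2 * u)` equal `-1`, so `ζ * x` has order `≤ 2 * u`.
  have hx : x ^ (2 * u) = -1 := by
    refine (mul_self_eq_one_iff.mp ?_).resolve_left fun h1 => ?_
    · rw [← pow_add, ← two_mul, ← mul_assoc, show 2 * 2 = 4 from rfl, ← hu, pow_orderOf_eq_one]
    · have := Nat.le_of_dvd (by omega) (orderOf_dvd_of_pow_eq_one h1)
      omega
  have : (ζ * x) ^ (2 * u) = 1 := by rw [mul_pow, pow_mul, hζ, hodd.neg_one_pow, hx]; ring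
  have := Nat.le_of_dvd (by omega) (h ▸ orderOf_dvd_of_pow_eq_one this)
  omega

theorem orderOf_mul_eq_orderOf_iff_eight_dvd_lcm (hζ : ζ ^ 2 = -1) (hR : (-1 : R) ≠ 1) :
    orderOf (ζ * x) = orderOf x ↔ 8 ∣ Nat.lcm (orderOf x) (orderOf (ζ * x)) := by
  have hζ4 : ζ ^ 4 = 1 := by rw [show 4 = 2 * 2 from rfl, pow_mul, hζ]; norm_num
  refine ⟨fun h => ?_, fun h => ?_⟩
  · rw [h, Nat.lcm_self]
    exact eight_dvd_orderOf_of_orderOf_mul_eq hζ hR h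
  rcases Nat.prime_two.pow_dvd_or_pow_dvd_of_pow_dvd_lcm (e := 3) h with h8 | h8
  · exact orderOf_mul_eq_of_eight_dvd hζ4 h8
  · have hx : -ζ * (ζ * x) = x := by linear_combination (-x) * hζ
    have hζ4' : (-ζ) ^ 4 = 1 := by rw [← hζ4]; ring
    rw [← orderOf_mul_eq_of_eight_dvd hζ4' h8, hx]

end OrderOfMul

abbrev GaussianZMod (n : ℕ) := QuadraticAlgebra (ZMod n) (-1) 0

open QuadraticAlgebra

theorem subAddStep_semiconj (n : ℕ) :
    Semiconj (equivProd (-1 : ZMod n) 0).symm (subAddStep n) ((⟨1, 1⟩ : GaussianZMod n) * ·) := by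
  rintro ⟨a, b⟩
  ext <;> simp [subAddStep, equivProd] <;> ring

theorem minimalPeriod_subAddStep_zero (n : ℕ) : minimalPeriod (subAddStep n) 0 = 1 :=
  minimalPeriod_eq_one_iff_isFixedPt.mpr (by simp [IsFixedPt, subAddStep])

section NotSquare

variable {p : ℕ} [Fact p.Prime] (hsq : ¬IsSquare (-1 : ZMod p))
include hsq

theorem fact_sq_ne_of_not_isSquare : Fact (∀ r : ZMod p, r ^ 2 ≠ -1 + 0 * r) :=
  ⟨fun r h => hsq ⟨r, by linear_combination -h⟩⟩

theorem minimalPeriod_subAddStep_of_not_isSquare {x : ZMod p × ZMod p} (hx : x ≠ 0) :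
    minimalPeriod (subAddStep p) x = orderOf (⟨1, 1⟩ : GaussianZMod p) := by
  have := fact_sq_ne_of_not_isSquare hsq
  rw [← (subAddStep_semiconj p).minimalPeriod_eq (equivProd _ _).symm.injective]
  refine minimalPeriod_mul_left_of_ne_zero _ fun h => hx ?_
  simpa [QuadraticAlgebra.ext_iff, Prod.ext_iff] using h

theorem eight_dvd_orderOf_of_not_isSquare [Fact (2 < p)] :
    8 ∣ orderOf (⟨1, 1⟩ : GaussianZMod p) := by
  have := fact_sq_ne_of_not_isSquare hsq
  refine eight_dvd_orderOf_of_orderOf_mul_eq (ζ := -ω) (by ext <;> simp [sq])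
    (fun h => ZMod.neg_one_ne_one (by simpa using congrArg re h)) ?_
  rw [show -ω * (⟨1, 1⟩ : GaussianZMod p) = star ⟨1, 1⟩ by ext <;> simp]
  exact MulEquiv.orderOf_eq (starRingAut : RingAut (GaussianZMod p)).toMulEquiv _

theorem exists_minimalPeriod_ne_iff_of_not_isSquare [Fact (2 < p)] {k : ℕ} (hk : 0 < k)
    (hfix : ∀ x : ZMod p × ZMod p, (subAddStep p)^[k] x = x)
    (hmin : ∀ j, 0 < j → (∀ x : ZMod p × ZMod p, (subAddStep p)^[j] x = x) → k ≤ j) :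
    (∃ x : ZMod p × ZMod p, minimalPeriod (subAddStep p) x ≠ 1 ∧
      minimalPeriod (subAddStep p) x ≠ k) ↔ ¬ 8 ∣ k := by
  have hper : ∀ x, minimalPeriod (subAddStep p) x = 1 ∨
      minimalPeriod (subAddStep p) x = orderOf (⟨1, 1⟩ : GaussianZMod p) := by
    intro x
    rcases eq_or_ne x 0 with rfl | hx
    · exact .inl (minimalPeriod_subAddStep_zero p)
    · exact .inr (minimalPeriod_subAddStep_of_not_isSquare hsq hx)
  have hx₀ : ((1, 0) : ZMod p × ZMod p) ≠ 0 := by simp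
  obtain rfl : k = orderOf (⟨1, 1⟩ : GaussianZMod p) := by
    rw [eq_minimalPeriod_of_forall_dvd hk hfix hmin (x₀ := (1, 0)) fun x => ?_,
      minimalPeriod_subAddStep_of_not_isSquare hsq hx₀]
    rcases hper x with h | h <;> simp [h, minimalPeriod_subAddStep_of_not_isSquare hsq hx₀]
  simp only [eight_dvd_orderOf_of_not_isSquare hsq, not_true_eq_false, iff_false, not_exists,
    not_and, not_not]
  exact fun x h => (hper x).resolve_left h

end NotSquare

def eigenCoords {n : ℕ} (i : ZMod n) (v : ZMod n × ZMod n) : ZMod n × ZMod n :=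
  (v.1 + i * v.2, v.1 - i * v.2)

theorem eigenCoords_semiconj {n : ℕ} {i : ZMod n} (hi : i * i = -1) :
    Semiconj (eigenCoords i) (subAddStep n) (Prod.map ((1 + i) * ·) ((1 - i) * ·)) := by
  rintro ⟨a, b⟩
  simp only [eigenCoords, subAddStep, Prod.map, Prod.mk.injEq]
  constructor <;> linear_combination (-b) * hi

section Square

variable {p : ℕ} [Fact p.Prime] [Fact (2 < p)] {i : ZMod p} (hi : i * i = -1)
include hi

theorem eigenCoords_bijective : Bijective (eigenCoords i) := by
  have h2 : (2 : ZMod p) ≠ 0 := fun h => ZMod.neg_one_ne_one (n := p) (by linear_combination -h)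
  have hi0 : i ≠ 0 := by rintro rfl; simp at hi
  refine Finite.injective_iff_bijective.mp fun ⟨a, b⟩ ⟨c, d⟩ h => ?_
  obtain ⟨e1, e2⟩ := Prod.mk.inj h
  rw [Prod.mk.injEq]
  exact ⟨mul_left_cancel₀ h2 (by linear_combination e1 + e2),
    mul_left_cancel₀ (mul_ne_zero h2 hi0) (by linear_combination e1 - e2)⟩

theorem minimalPeriod_subAddStep_eq_lcm (x : ZMod p × ZMod p) :
    minimalPeriod (subAddStep p) x = Nat.lcm (minimalPeriod ((1 + i) * ·) (eigenCoords i x).1)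
      (minimalPeriod ((1 - i) * ·) (eigenCoords i x).2) := by
  rw [← minimalPeriod_prodMap, (eigenCoords_semiconj hi).minimalPeriod_eq
    (eigenCoords_bijective hi).injective]

theorem eq_lcm_orderOf_of_sq_eq_neg_one {k : ℕ} (hk : 0 < k)
    (hfix : ∀ x : ZMod p × ZMod p, (subAddStep p)^[k] x = x)
    (hmin : ∀ j, 0 < j → (∀ x : ZMod p × ZMod p, (subAddStep p)^[j] x = x) → k ≤ j) :
    k = Nat.lcm (orderOf (1 + i)) (orderOf (1 - i)) := by
  have hper := minimalPeriod_subAddStep_eq_lcm hi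
  obtain ⟨x₀, hx₀⟩ := (eigenCoords_bijective hi).2 (1, 1)
  rw [eq_minimalPeriod_of_forall_dvd hk hfix hmin (x₀ := x₀) fun x => ?_]
  · simp [hper, hx₀, minimalPeriod_mul_left_of_ne_zero]
  rw [hper, hper, hx₀]
  simp only [minimalPeriod_mul_left_of_ne_zero _ one_ne_zero]
  exact Nat.lcm_dvd ((minimalPeriod_mul_left_dvd_orderOf _ _).trans (Nat.dvd_lcm_left _ _))
    ((minimalPeriod_mul_left_dvd_orderOf _ _).trans (Nat.dvd_lcm_right _ _))

theorem exists_minimalPeriod_ne_iff_of_sq_eq_neg_one {k : ℕ} (hk : 0 < k)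
    (hfix : ∀ x : ZMod p × ZMod p, (subAddStep p)^[k] x = x)
    (hmin : ∀ j, 0 < j → (∀ x : ZMod p × ZMod p, (subAddStep p)^[j] x = x) → k ≤ j) :
    (∃ x : ZMod p × ZMod p, minimalPeriod (subAddStep p) x ≠ 1 ∧
      minimalPeriod (subAddStep p) x ≠ k) ↔ ¬ 8 ∣ k := by
  obtain rfl := eq_lcm_orderOf_of_sq_eq_neg_one hi hk hfix hmin
  set a := orderOf (1 + i)
  set b := orderOf (1 - i)
  have hi0 : i ≠ 0 := by rintro rfl; simp at hi
  have hper := minimalPeriod_subAddStep_eq_lcm hi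
  obtain ⟨x₁, hx₁⟩ := (eigenCoords_bijective hi).2 (1, 0)
  obtain ⟨x₂, hx₂⟩ := (eigenCoords_bijective hi).2 (0, 1)
  have ha : minimalPeriod (subAddStep p) x₁ = a := by
    simp [hper, hx₁, minimalPeriod_mul_left_of_ne_zero, minimalPeriod_mul_left_zero, a]
  have hb : minimalPeriod (subAddStep p) x₂ = b := by
    simp [hper, hx₂, minimalPeriod_mul_left_of_ne_zero, minimalPeriod_mul_left_zero, b]
  have ha1 : a ≠ 1 := fun h => hi0 (by simpa using orderOf_eq_one_iff.mp h)
  have hb1 : b ≠ 1 := fun h => hi0 (by simpa using orderOf_eq_one_iff.mp h)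
  have hab : a = b ↔ 8 ∣ Nat.lcm a b := by
    have := orderOf_mul_eq_orderOf_iff_eight_dvd_lcm (ζ := -i) (x := 1 + i)
      (by linear_combination hi) ZMod.neg_one_ne_one
    rwa [show -i * (1 + i) = 1 - i by linear_combination -hi, eq_comm] at this
  rw [← hab]
  constructor
  · rintro ⟨x, hx1, hxk⟩ heq
    rw [hper] at hx1 hxk
    obtain h | h : minimalPeriod ((1 + i) * ·) (eigenCoords i x).1 = 1 ∨ _ = a :=
      minimalPeriod_mul_left_eq_one_or _ _ <;>
    obtain h' | h' : minimalPeriod ((1 - i) * ·) (eigenCoords i x).2 = 1 ∨ _ = b :=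
      minimalPeriod_mul_left_eq_one_or _ _ <;>
    simp only [h, h', ← heq, Nat.lcm_self, Nat.lcm_one_left, Nat.lcm_one_right] at hx1 hxk <;>
    contradiction
  · intro hne
    by_cases hak : a = Nat.lcm a b
    · exact ⟨x₂, by rwa [hb], by rw [hb]; exact fun h => hne (hak.trans h.symm)⟩
    · exact ⟨x₁, by rwa [ha], by rwa [ha]⟩

end Square

/-- for an odd prime `p` with `k` the `ℤ_p`-order of the sub-add matrix,
`Γ_{M,p}` contains a secondary cycle (a vertex whose minimal period is neither `1` nor
`k`) if and only if `8` does not divide `k`. -/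
theorem stmt17 (p k : ℕ) (hp : p.Prime) (hpodd : p ≠ 2)
    (hk : 0 < k) (hfix : ∀ x : ZMod p × ZMod p, (subAddStep p)^[k] x = x)
    (hmin : ∀ j, 0 < j → (∀ x : ZMod p × ZMod p, (subAddStep p)^[j] x = x) → k ≤ j) :
    (∃ x : ZMod p × ZMod p,
      Function.minimalPeriod (subAddStep p) x ≠ 1 ∧
      Function.minimalPeriod (subAddStep p) x ≠ k) ↔ ¬ (8 ∣ k) := by
  have : Fact p.Prime := ⟨hp⟩
  have : Fact (2 < p) := ⟨hp.two_le.lt_of_ne' hpodd⟩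
  by_cases hsq : IsSquare (-1 : ZMod p)
  · obtain ⟨i, hi⟩ := hsq
    exact exists_minimalPeriod_ne_iff_of_sq_eq_neg_one hi.symm hk hfix hmin
  · exact exists_minimalPeriod_ne_iff_of_not_isSquare hsq hk hfix hmin
end

section
/- Let p be an odd prime, let M be the sub-add matrix, and let k be the ℤ_p-order of M. (a) If p ≡ 3 (mod 8) or p ≡ 7 (mod 8), then Γ_{M,p} has no secondary cycles: every nonzero vertex of (ℤ/pℤ)² has minimal period k. (b) If p ≡ 5 (mod 8), then Γ_{M,p} contains a secondary cycle: there exists a vertex whose minimal period is neither 1 nor k. -/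
/-- Iterates of the sub-add map are of the "complex multiplication" form. -/
lemma subAdd_iterate (p : ℕ) (n : ℕ) :
    ∃ a b : ZMod p, ∀ v : ZMod p × ZMod p,
      (subAddStep p)^[n] v = (a * v.1 - b * v.2, b * v.1 + a * v.2) := by
  induction n with
  | zero => exact ⟨1, 0, fun v => by simp⟩
  | succ n ih =>
    obtain ⟨a, b, h⟩ := ih
    refine ⟨a - b, a + b, fun v => ?_⟩
    rw [Function.iterate_succ_apply', h]
    show ((a * v.1 - b * v.2) - (b * v.1 + a * v.2),
          (a * v.1 - b * v.2) + (b * v.1 + a * v.2)) = _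
    simp only [Prod.mk.injEq]
    constructor <;> ring

/-- On an eigenvector `(1, e)` with `e² = -1`, the sub-add map acts by scaling by `1 - e`. -/
lemma subAdd_eigen (p : ℕ) (e : ZMod p) (he : e * e = -1) (n : ℕ) :
    (subAddStep p)^[n] (1, e) = ((1 - e) ^ n, e * (1 - e) ^ n) := by
  induction n with
  | zero => simp
  | succ n ih =>
    rw [Function.iterate_succ_apply', ih]
    show ((1 - e) ^ n - e * (1 - e) ^ n, (1 - e) ^ n + e * (1 - e) ^ n) = _
    simp only [Prod.mk.injEq]
    constructor
    · ring
    · linear_combination (1 - e : ZMod p) ^ n * he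

lemma minPeriod_eigen (p : ℕ) [Fact p.Prime] (e : ZMod p) (he : e * e = -1)
    (hne : (1 - e : ZMod p) ≠ 0) :
    Function.minimalPeriod (subAddStep p) (1, e) = orderOf (1 - e : ZMod p) := by
  have hfin : IsOfFinOrder (1 - e : ZMod p) := by
    rw [isOfFinOrder_iff_pow_eq_one]
    refine ⟨p - 1, ?_, ZMod.pow_card_sub_one_eq_one hne⟩
    have := (Fact.out : p.Prime).two_le
    omega
  apply Nat.dvd_antisymm
  · apply Function.IsPeriodicPt.minimalPeriod_dvd
    show (subAddStep p)^[orderOf (1 - e : ZMod p)] (1, e) = (1, e)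
    rw [subAdd_eigen p e he, pow_orderOf_eq_one]
    simp
  · rw [orderOf_dvd_iff_pow_eq_one]
    have h := Function.iterate_minimalPeriod (f := subAddStep p) (x := ((1 : ZMod p), e))
    rw [subAdd_eigen p e he] at h
    exact congrArg Prod.fst h

/-- for an odd prime `p` with `k` the `ℤ_p`-order of the sub-add matrix:
(a) if `p ≡ 3 (mod 8)` or `p ≡ 7 (mod 8)`, `Γ_{M,p}` has no secondary cycles: every
nonzero vertex has minimal period `k`;
(b) if `p ≡ 5 (mod 8)`, `Γ_{M,p}` contains a secondary cycle: some vertex has minimal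
period neither `1` nor `k`. -/
theorem stmt18 (p k : ℕ) (hp : p.Prime) (hpodd : p ≠ 2)
    (hk : 0 < k) (hfix : ∀ x : ZMod p × ZMod p, (subAddStep p)^[k] x = x)
    (hmin : ∀ j, 0 < j → (∀ x : ZMod p × ZMod p, (subAddStep p)^[j] x = x) → k ≤ j) :
    ((p % 8 = 3 ∨ p % 8 = 7) → ∀ x : ZMod p × ZMod p, x ≠ (0, 0) →
      Function.minimalPeriod (subAddStep p) x = k) ∧
    (p % 8 = 5 → ∃ x : ZMod p × ZMod p,
      Function.minimalPeriod (subAddStep p) x ≠ 1 ∧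
      Function.minimalPeriod (subAddStep p) x ≠ k) := by
  haveI : Fact p.Prime := ⟨hp⟩
  have hp2 : 2 ≤ p := hp.two_le
  have h2ne : (2 : ZMod p) ≠ 0 := by
    intro h0
    have hd : (p : ℕ) ∣ 2 := (ZMod.natCast_eq_zero_iff 2 p).mp (by exact_mod_cast h0)
    have := Nat.le_of_dvd (by norm_num) hd
    omega
  have h1ne : (-1 : ZMod p) ≠ 0 := by
    intro h0
    have : (1 : ZMod p) = 0 := by linear_combination -h0
    exact one_ne_zero this
  constructor
  · -- part (a)
    intro hmod x hx
    have hper : Function.IsPeriodicPt (subAddStep p) k x := hfix x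
    have hpos : 0 < Function.minimalPeriod (subAddStep p) x :=
      hper.minimalPeriod_pos hk
    set m := Function.minimalPeriod (subAddStep p) x with hm
    have hdvd : m ∣ k := hper.minimalPeriod_dvd
    obtain ⟨a, b, hab⟩ := subAdd_iterate p m
    have hx' : (subAddStep p)^[m] x = x := Function.iterate_minimalPeriod
    rw [hab] at hx'
    have h1 : a * x.1 - b * x.2 = x.1 := congrArg Prod.fst hx'
    have h2 : b * x.1 + a * x.2 = x.2 := congrArg Prod.snd hx'
    -- set c = a - 1, show c^2 + b^2 = 0
    have hcb : ((a - 1) * (a - 1) + b * b) * x.1 = 0 := by linear_combination (a-1) * h1 + b * h2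
    have hcb2 : ((a - 1) * (a - 1) + b * b) * x.2 = 0 := by linear_combination (a-1) * h2 - b * h1
    have hsum : (a - 1) * (a - 1) + b * b = 0 := by
      by_contra h
      apply hx
      have e1 : x.1 = 0 := by
        rcases mul_eq_zero.mp hcb with h' | h'
        · exact absurd h' h
        · exact h'
      have e2 : x.2 = 0 := by
        rcases mul_eq_zero.mp hcb2 with h' | h'
        · exact absurd h' h
        · exact h'
      exact Prod.ext e1 e2
    have hns : ¬ IsSquare (-1 : ZMod p) := by
      rw [ZMod.exists_sq_eq_neg_one_iff]
      have : p % 4 = p % 8 % 4 := (Nat.mod_mod_of_dvd p (by norm_num)).symm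
      rcases hmod with h | h <;> omega
    have hb0 : b = 0 := by
      by_contra hb
      apply hns
      refine ⟨(a - 1) * b⁻¹, ?_⟩
      have hbinv : b * b⁻¹ = 1 := mul_inv_cancel₀ hb
      have : (a - 1) * (a - 1) = -(b * b) := by linear_combination hsum
      field_simp
      linear_combination -this
    have ha1 : a = 1 := by
      have : (a - 1) * (a - 1) = 0 := by rw [hb0] at hsum; linear_combination hsum
      have := mul_self_eq_zero.mp this
      linear_combination this
    have hall : ∀ v : ZMod p × ZMod p, (subAddStep p)^[m] v = v := by
      intro v
      rw [hab, ha1, hb0]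
      simp
    have hkm : k ≤ m := hmin m hpos hall
    exact Nat.le_antisymm (Nat.le_of_dvd hk hdvd) hkm
  · -- part (b)
    intro hmod
    have hsq : IsSquare (-1 : ZMod p) := by
      rw [ZMod.exists_sq_eq_neg_one_iff]
      have : p % 4 = p % 8 % 4 := (Nat.mod_mod_of_dvd p (by norm_num)).symm
      omega
    obtain ⟨i, hi⟩ := hsq
    have hi' : i * i = -1 := hi.symm
    have hi2 : (-i) * (-i) = -1 := by linear_combination hi'
    -- the two eigenvalues
    set l1 : ZMod p := 1 - (-i) with hl1
    set l2 : ZMod p := 1 - i with hl2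
    have hprod : l1 * l2 = 2 := by
      rw [hl1, hl2]; linear_combination -hi'
    have hl1ne : l1 ≠ 0 := by
      intro h0; apply h2ne; rw [← hprod, h0, zero_mul]
    have hl2ne : l2 ≠ 0 := by
      intro h0; apply h2ne; rw [← hprod, h0, mul_zero]
    have hine : i ≠ 0 := by
      intro h0; apply h1ne; rw [← hi', h0, mul_zero]
    have hl1ne1 : l1 ≠ 1 := by
      rw [hl1]; intro h0; apply hine
      have : -i = 0 := by linear_combination -h0
      linear_combination -this
    have hl2ne1 : l2 ≠ 1 := by
      rw [hl2]; intro h0; apply hine; linear_combination -h0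
    -- minimal periods of the eigenvectors
    have hP1 : Function.minimalPeriod (subAddStep p) ((1 : ZMod p), -i) = orderOf l1 :=
      minPeriod_eigen p (-i) hi2 hl1ne
    have hP2 : Function.minimalPeriod (subAddStep p) ((1 : ZMod p), i) = orderOf l2 :=
      minPeriod_eigen p i hi' hl2ne
    -- orders divide k
    have hdvd1 : orderOf l1 ∣ k := by
      rw [orderOf_dvd_iff_pow_eq_one]
      have h := hfix ((1 : ZMod p), -i)
      rw [subAdd_eigen p (-i) hi2] at h
      exact congrArg Prod.fst h
    have hdvd2 : orderOf l2 ∣ k := by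
      rw [orderOf_dvd_iff_pow_eq_one]
      have h := hfix ((1 : ZMod p), i)
      rw [subAdd_eigen p i hi'] at h
      exact congrArg Prod.fst h
    -- orders are both ≠ 1
    have hord1 : orderOf l1 ≠ 1 := fun h0 => hl1ne1 (orderOf_eq_one_iff.mp h0)
    have hord2 : orderOf l2 ≠ 1 := fun h0 => hl2ne1 (orderOf_eq_one_iff.mp h0)
    -- orders are distinct via quadratic characters
    have hps : p / 2 * 2 = p - 1 := by omega
    have sq1 : l1 ^ (p / 2) * (l1 ^ (p / 2)) = 1 := by
      rw [← pow_add, ← two_mul, mul_comm 2, hps]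
      exact ZMod.pow_card_sub_one_eq_one hl1ne
    have sq2 : l2 ^ (p / 2) * (l2 ^ (p / 2)) = 1 := by
      rw [← pow_add, ← two_mul, mul_comm 2, hps]
      exact ZMod.pow_card_sub_one_eq_one hl2ne
    have h2ns : ¬ IsSquare (2 : ZMod p) := by
      rw [ZMod.exists_sq_eq_two_iff hpodd]; omega
    have hprodpow : l1 ^ (p / 2) * l2 ^ (p / 2) ≠ 1 := by
      rw [← mul_pow, hprod]
      intro h0
      exact h2ns ((ZMod.euler_criterion p h2ne).mpr h0)
    have hm1ne1 : (-1 : ZMod p) ≠ 1 := by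
      intro h0
      apply h2ne
      linear_combination -h0
    have hdistinct : orderOf l1 ≠ orderOf l2 := by
      rcases mul_self_eq_one_iff.mp sq1 with e1 | e1 <;>
        rcases mul_self_eq_one_iff.mp sq2 with e2 | e2
      · exact absurd (by rw [e1, e2, one_mul]) hprodpow
      · -- l1 square, l2 not: orderOf l1 ∣ p/2, orderOf l2 ∤ p/2
        intro heq
        have d1 : orderOf l1 ∣ p / 2 := orderOf_dvd_iff_pow_eq_one.mpr e1
        rw [heq] at d1
        have := orderOf_dvd_iff_pow_eq_one.mp d1
        rw [this] at e2
        exact hm1ne1 e2.symm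
      · intro heq
        have d2 : orderOf l2 ∣ p / 2 := orderOf_dvd_iff_pow_eq_one.mpr e2
        rw [← heq] at d2
        have := orderOf_dvd_iff_pow_eq_one.mp d2
        rw [this] at e1
        exact hm1ne1 e1.symm
      · exact absurd (by rw [e1, e2]; ring) hprodpow
    -- pick the eigenvector with smaller order
    rcases Nat.lt_or_ge (orderOf l1) (orderOf l2) with hlt | hge
    · refine ⟨((1 : ZMod p), -i), ?_, ?_⟩
      · rw [hP1]; exact hord1
      · rw [hP1]
        have : orderOf l2 ≤ k := Nat.le_of_dvd hk hdvd2
        omega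
    · have hlt : orderOf l2 < orderOf l1 := lt_of_le_of_ne hge hdistinct.symm
      refine ⟨((1 : ZMod p), i), ?_, ?_⟩
      · rw [hP2]; exact hord2
      · rw [hP2]
        have : orderOf l1 ≤ k := Nat.le_of_dvd hk hdvd1
        omega
end

section
/- Let p be an odd prime, let M be the sub-add matrix, let t be the multiplicative order of −4 in (ℤ/pℤ)^×, and let k be the ℤ_p-order of M. (a) If Γ_{M,p} has no secondary cycles, then exactly p² − 1 vertices of (ℤ/pℤ)² have minimal period k; hence k divides p² − 1 and Γ_{M,p} has exactly (p² − 1)/k directed cycles of length k (primary cycles). (b) If Γ_{M,p} has secondary cycles, then all secondary cycles have a common length s with s ∈ {t, 2t}; exactly p − 1 vertices have minimal period s and exactly p² − p vertices have minimal period k, so s divides p − 1, k divides p² − p, and Γ_{M,p} has exactly (p − 1)/s secondary cycles and exactly (p² − p)/k primary cycles. -/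
def SAGoal (p k t : ℕ) : Prop :=
    ((¬ ∃ x : ZMod p × ZMod p,
        Function.minimalPeriod (subAddStep p) x ≠ 1 ∧
        Function.minimalPeriod (subAddStep p) x ≠ k) →
      k ∣ p ^ 2 - 1 ∧
      {x : ZMod p × ZMod p |
        Function.minimalPeriod (subAddStep p) x = k}.ncard = p ^ 2 - 1) ∧
    ((∃ x : ZMod p × ZMod p,
        Function.minimalPeriod (subAddStep p) x ≠ 1 ∧
        Function.minimalPeriod (subAddStep p) x ≠ k) →
      ∃ s : ℕ, (s = t ∨ s = 2 * t) ∧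
        (∀ x : ZMod p × ZMod p,
          Function.minimalPeriod (subAddStep p) x ≠ 1 →
          Function.minimalPeriod (subAddStep p) x ≠ k →
          Function.minimalPeriod (subAddStep p) x = s) ∧
        s ∣ p - 1 ∧ k ∣ p ^ 2 - p ∧
        {x : ZMod p × ZMod p |
          Function.minimalPeriod (subAddStep p) x = s}.ncard = p - 1 ∧
        {x : ZMod p × ZMod p |
          Function.minimalPeriod (subAddStep p) x = k}.ncard = p ^ 2 - p)

private lemma minPeriod_eq_of_iff {α : Type*} {f : α → α} {x : α} {n : ℕ}
    (h : ∀ j, Function.IsPeriodicPt f j x ↔ n ∣ j) :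
    Function.minimalPeriod f x = n :=
  Nat.dvd_antisymm ((h n).mpr dvd_rfl).minimalPeriod_dvd
    ((h _).mp (Function.isPeriodicPt_minimalPeriod f x))

private lemma natDiv4 {t e : ℕ} (ht : 0 < t) (h1 : t ∣ e) (h2 : e ∣ 4 * t) :
    e = t ∨ e = 2 * t ∨ e = 4 * t := by
  obtain ⟨d, rfl⟩ := h1
  have hd : d ∣ 4 := (Nat.mul_dvd_mul_iff_left ht).mp (by rwa [mul_comm 4 t] at h2)
  have hd4 : d ≤ 4 := Nat.le_of_dvd (by norm_num) hd
  have hd' : d = 1 ∨ d = 2 ∨ d = 4 := by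
    interval_cases d <;> first | (left; rfl) | (right; left; rfl) | (right; right; rfl) | omega
  rcases hd' with rfl | rfl | rfl
  · left; omega
  · right; left; omega
  · right; right; omega

private lemma ncard_preimage_bij {α β : Type*} {φ : α → β} (h : Function.Bijective φ)
    (A : Set β) : (φ ⁻¹' A).ncard = A.ncard := by
  rw [← Set.ncard_image_of_injective _ h.injective, Set.image_preimage_eq A h.surjective]

private lemma sub_dvd1 {p : ℕ} (hp : 1 ≤ p) : (p - 1) ∣ p ^ 2 - 1 := by
  obtain ⟨m, rfl⟩ : ∃ m, p = m + 1 := ⟨p - 1, by omega⟩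
  refine ⟨m + 2, ?_⟩
  simp only [Nat.add_sub_cancel]
  have h : (m + 1) ^ 2 = m * (m + 2) + 1 := by ring
  omega

private lemma sub_dvd2 {p : ℕ} (hp : 1 ≤ p) : (p - 1) ∣ p ^ 2 - p := by
  obtain ⟨m, rfl⟩ : ∃ m, p = m + 1 := ⟨p - 1, by omega⟩
  refine ⟨m + 1, ?_⟩
  simp only [Nat.add_sub_cancel]
  have h : (m + 1) ^ 2 = m * (m + 1) + (m + 1) := by ring
  omega

section counts
variable {p : ℕ} [NeZero p]

private lemma ncard_zmod_ne : {x : ZMod p | x ≠ 0}.ncard = p - 1 := by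
  have h : {x : ZMod p | x ≠ 0} = ({0} : Set (ZMod p))ᶜ := by ext; simp
  have h2 := Set.ncard_add_ncard_compl ({0} : Set (ZMod p))
  rw [Set.ncard_singleton, Nat.card_zmod] at h2
  rw [h]; omega

private lemma ncard_prod_ne_zero :
    {y : ZMod p × ZMod p | y ≠ 0}.ncard = p ^ 2 - 1 := by
  have h : {y : ZMod p × ZMod p | y ≠ 0} = ({0} : Set (ZMod p × ZMod p))ᶜ := by ext; simp
  have h2 := Set.ncard_add_ncard_compl ({0} : Set (ZMod p × ZMod p))
  rw [Set.ncard_singleton, Nat.card_prod, Nat.card_zmod] at h2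
  rw [h]; rw [pow_two]; omega

private lemma card_zmod_ne_sub : Nat.card {x : ZMod p // x ≠ 0} = p - 1 := by
  have h : Nat.card {x : ZMod p // x ≠ 0} = {x : ZMod p | x ≠ 0}.ncard :=
    Nat.card_coe_set_eq _
  rw [h, ncard_zmod_ne]

private lemma pmul : p * (p - 1) = p ^ 2 - p := by
  obtain ⟨m, rfl⟩ : ∃ m, p = m + 1 := ⟨p - 1, by have := NeZero.pos p; omega⟩
  simp only [Nat.add_sub_cancel]
  have h2 : (m + 1) * m = m * m + m := by ring
  have h3 : (m + 1) ^ 2 = m * m + 2 * m + 1 := by ring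
  omega

private lemma ncard_snd_ne :
    {y : ZMod p × ZMod p | y.2 ≠ 0}.ncard = p ^ 2 - p := by
  rw [← Nat.card_coe_set_eq]
  have e : {y : ZMod p × ZMod p // y.2 ≠ 0} ≃ ZMod p × {x : ZMod p // x ≠ 0} :=
    { toFun := fun y => (y.1.1, ⟨y.1.2, y.2⟩)
      invFun := fun z => ⟨(z.1, z.2.1), z.2.2⟩
      left_inv := fun y => rfl
      right_inv := fun z => rfl }
  exact (Nat.card_congr e).trans (by rw [Nat.card_prod, Nat.card_zmod, card_zmod_ne_sub, pmul])

private lemma ncard_fst_ne :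
    {y : ZMod p × ZMod p | y.1 ≠ 0}.ncard = p ^ 2 - p := by
  rw [← Nat.card_coe_set_eq]
  have e : {y : ZMod p × ZMod p // y.1 ≠ 0} ≃ ZMod p × {x : ZMod p // x ≠ 0} :=
    { toFun := fun y => (y.1.2, ⟨y.1.1, y.2⟩)
      invFun := fun z => ⟨(z.2.1, z.1), z.2.2⟩
      left_inv := fun y => rfl
      right_inv := fun z => rfl }
  exact (Nat.card_congr e).trans (by rw [Nat.card_prod, Nat.card_zmod, card_zmod_ne_sub, pmul])

private lemma ncard_fst_ne_snd_eq :
    {y : ZMod p × ZMod p | y.1 ≠ 0 ∧ y.2 = 0}.ncard = p - 1 := by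
  rw [← Nat.card_coe_set_eq]
  have e : {y : ZMod p × ZMod p // y.1 ≠ 0 ∧ y.2 = 0} ≃ {x : ZMod p // x ≠ 0} :=
    { toFun := fun y => ⟨y.1.1, y.2.1⟩
      invFun := fun x => ⟨(x.1, 0), x.2, rfl⟩
      left_inv := fun y => Subtype.ext (Prod.ext rfl y.2.2.symm)
      right_inv := fun x => rfl }
  exact (Nat.card_congr e).trans card_zmod_ne_sub

private lemma ncard_snd_ne_fst_eq :
    {y : ZMod p × ZMod p | y.2 ≠ 0 ∧ y.1 = 0}.ncard = p - 1 := by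
  rw [← Nat.card_coe_set_eq]
  have e : {y : ZMod p × ZMod p // y.2 ≠ 0 ∧ y.1 = 0} ≃ {x : ZMod p // x ≠ 0} :=
    { toFun := fun y => ⟨y.1.2, y.2.1⟩
      invFun := fun x => ⟨(0, x.1), x.2, rfl⟩
      left_inv := fun y => Subtype.ext (Prod.ext y.2.2.symm rfl)
      right_inv := fun x => rfl }
  exact (Nat.card_congr e).trans card_zmod_ne_sub

end counts

private lemma split_main (p k t : ℕ) [hp : Fact p.Prime] (hpodd : p ≠ 2)
    (ht : t = orderOf (-4 : ZMod p)) (hk : 0 < k)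
    (hfix : ∀ x : ZMod p × ZMod p, (subAddStep p)^[k] x = x)
    (hmin : ∀ j, 0 < j → (∀ x : ZMod p × ZMod p, (subAddStep p)^[j] x = x) → k ≤ j)
    (i : ZMod p) (hi : i ^ 2 = -1) : SAGoal p k t := by
  have hp2 : (2 : ZMod p) ≠ 0 := by
    have h : ((2 : ℕ) : ZMod p) ≠ 0 := by
      rw [Ne, ZMod.natCast_eq_zero_iff]
      exact fun h => hpodd ((Nat.prime_dvd_prime_iff_eq hp.out Nat.prime_two).mp h)
    simpa using h
  have hi0 : i ≠ 0 := by
    intro h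
    rw [h] at hi
    have h1 : (1 : ZMod p) = 0 := by linear_combination hi
    exact one_ne_zero h1
  set f := subAddStep p with hf
  set u₁ : ZMod p := 1 + i with hu₁def
  set u₂ : ZMod p := 1 - i with hu₂def
  have hu₁0 : u₁ ≠ 0 := by
    intro h
    rw [hu₁def] at h
    have h2 : (2 : ZMod p) = 0 := by linear_combination (1 - i) * h + hi
    exact hp2 h2
  have hu₂0 : u₂ ≠ 0 := by
    intro h
    rw [hu₂def] at h
    have h2 : (2 : ZMod p) = 0 := by linear_combination (1 + i) * h + hi
    exact hp2 h2
  have hu₁1 : u₁ ≠ 1 := by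
    intro h
    rw [hu₁def] at h
    exact hi0 (by linear_combination h)
  have hu₂1 : u₂ ≠ 1 := by
    intro h
    rw [hu₂def] at h
    exact hi0 (by linear_combination -h)
  have hppos : 0 < p - 1 := by have := hp.out.two_le; omega
  have horder : ∀ u : ZMod p, u ≠ 0 → 0 < orderOf u ∧ orderOf u ∣ p - 1 := by
    intro u hu
    have hpow : u ^ (p - 1) = 1 := ZMod.pow_card_sub_one_eq_one hu
    exact ⟨orderOf_pos_iff.mpr (isOfFinOrder_iff_pow_eq_one.mpr ⟨p - 1, hppos, hpow⟩),
      orderOf_dvd_of_pow_eq_one hpow⟩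
  set e₁ := orderOf u₁ with he₁def
  set e₂ := orderOf u₂ with he₂def
  obtain ⟨he₁pos, he₁dvd⟩ := horder u₁ hu₁0
  obtain ⟨he₂pos, he₂dvd⟩ := horder u₂ hu₂0
  have he₁1 : e₁ ≠ 1 := fun h => hu₁1 (orderOf_eq_one_iff.mp h)
  have he₂1 : e₂ ≠ 1 := fun h => hu₂1 (orderOf_eq_one_iff.mp h)
  have hu₁4 : u₁ ^ 4 = -4 := by rw [hu₁def]; linear_combination (i ^ 2 + 4 * i + 5) * hi
  have hu₂4 : u₂ ^ 4 = -4 := by rw [hu₂def]; linear_combination (i ^ 2 - 4 * i + 5) * hi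
  have h4ne : (-4 : ZMod p) ≠ 0 := by
    have h4 : (4 : ZMod p) = 2 * 2 := by norm_num
    rw [neg_ne_zero, h4]
    exact mul_ne_zero hp2 hp2
  have tpos : 0 < t := by rw [ht]; exact (horder _ h4ne).1
  have htdvd : ∀ u : ZMod p, u ^ 4 = -4 → t ∣ orderOf u ∧ orderOf u ∣ 4 * t := by
    intro u hu4
    constructor
    · rw [ht, ← hu4]; exact orderOf_pow_dvd 4
    · rw [orderOf_dvd_iff_pow_eq_one, pow_mul, hu4, ht]
      exact pow_orderOf_eq_one _
  set φ : ZMod p × ZMod p → ZMod p × ZMod p := fun x => (x.1 + x.2 * i, x.1 - x.2 * i)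
    with hφdef
  have hφinj : Function.Injective φ := by
    intro a b h
    have h1 : a.1 + a.2 * i = b.1 + b.2 * i := congrArg Prod.fst h
    have h2 : a.1 - a.2 * i = b.1 - b.2 * i := congrArg Prod.snd h
    have h2i : (2 : ZMod p) * i ≠ 0 := mul_ne_zero hp2 hi0
    have hb2 : a.2 = b.2 := by
      apply mul_left_cancel₀ h2i
      linear_combination h1 - h2
    have hb1 : a.1 = b.1 := by linear_combination h1 - i * hb2
    exact Prod.ext hb1 hb2
  have hφbij : Function.Bijective φ := Finite.injective_iff_bijective.mp hφinj
  have hstep : ∀ x, φ (f x) = (u₁ * (φ x).1, u₂ * (φ x).2) := by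
    intro x
    refine Prod.ext ?_ ?_
    · show (x.1 - x.2) + (x.1 + x.2) * i = (1 + i) * (x.1 + x.2 * i)
      linear_combination (-x.2) * hi
    · show (x.1 - x.2) - (x.1 + x.2) * i = (1 - i) * (x.1 - x.2 * i)
      linear_combination (-x.2) * hi
  have hiter : ∀ (j : ℕ) (x), φ (f^[j] x) = (u₁ ^ j * (φ x).1, u₂ ^ j * (φ x).2) := by
    intro j
    induction j with
    | zero => intro x; simp
    | succ n ih =>
      intro x
      rw [Function.iterate_succ_apply', hstep, ih]
      refine Prod.ext ?_ ?_ <;> simp [pow_succ] <;> ring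
  have hper : ∀ (j : ℕ) (x), Function.IsPeriodicPt f j x ↔
      (u₁ ^ j * (φ x).1 = (φ x).1 ∧ u₂ ^ j * (φ x).2 = (φ x).2) := by
    intro j x
    constructor
    · intro h
      have h' : f^[j] x = x := h
      have h2 := congrArg φ h'
      rw [hiter] at h2
      exact ⟨congrArg Prod.fst h2, congrArg Prod.snd h2⟩
    · intro ⟨h1, h2⟩
      show f^[j] x = x
      apply hφinj
      rw [hiter]
      exact Prod.ext h1 h2
  have hcancel : ∀ (u c : ZMod p) (j : ℕ), c ≠ 0 → (u ^ j * c = c ↔ orderOf u ∣ j) := by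
    intro u c j hc
    rw [orderOf_dvd_iff_pow_eq_one]
    constructor
    · intro h
      exact mul_right_cancel₀ hc (h.trans (one_mul c).symm)
    · intro h; rw [h, one_mul]
  have hchar : ∀ (x : ZMod p × ZMod p) (j : ℕ), Function.IsPeriodicPt f j x ↔
      Nat.lcm (if (φ x).1 = 0 then 1 else e₁) (if (φ x).2 = 0 then 1 else e₂) ∣ j := by
    intro x j
    rw [hper, Nat.lcm_dvd_iff]
    apply and_congr
    · by_cases h1 : (φ x).1 = 0
      · rw [if_pos h1, h1]
        simp
      · rw [if_neg h1, hcancel _ _ _ h1]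
    · by_cases h2 : (φ x).2 = 0
      · rw [if_pos h2, h2]
        simp
      · rw [if_neg h2, hcancel _ _ _ h2]
  have hmp : ∀ x : ZMod p × ZMod p, Function.minimalPeriod f x =
      Nat.lcm (if (φ x).1 = 0 then 1 else e₁) (if (φ x).2 = 0 then 1 else e₂) :=
    fun x => minPeriod_eq_of_iff (hchar x)
  have hφ10 : φ ((1 : ZMod p), (0 : ZMod p)) = (1, 1) := by simp [hφdef]
  have hkl : k = Nat.lcm e₁ e₂ := by
    have hL : Nat.lcm e₁ e₂ ∣ k := by
      have h := (hchar (1, 0) k).mp (hfix (1, 0))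
      rw [hφ10] at h
      simpa [one_ne_zero] using h
    have hU : k ≤ Nat.lcm e₁ e₂ := by
      apply hmin _ (Nat.lcm_pos he₁pos he₂pos)
      intro x
      refine (hchar x _).mpr ?_
      apply Nat.lcm_dvd <;> split_ifs <;>
        first
          | exact one_dvd _
          | exact Nat.dvd_lcm_left _ _
          | exact Nat.dvd_lcm_right _ _
    have := Nat.le_of_dvd hk hL
    omega
  have hφ0 : φ 0 = 0 := by simp [hφdef]
  have hmp0 : Function.minimalPeriod f 0 = 1 := by
    rw [hmp 0, hφ0]
    rw [if_pos (show ((0 : ZMod p × ZMod p)).1 = 0 from rfl),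
      if_pos (show ((0 : ZMod p × ZMod p)).2 = 0 from rfl), Nat.lcm_self]
  have hzero : ∀ x : ZMod p × ZMod p, Function.minimalPeriod f x = 1 → x = 0 := by
    intro x h
    rw [hmp x] at h
    by_cases hc1 : (φ x).1 = 0
    · by_cases hc2 : (φ x).2 = 0
      · apply hφinj
        rw [hφ0]
        exact Prod.ext hc1 hc2
      · rw [if_pos hc1, if_neg hc2, Nat.lcm_one_left] at h
        exact absurd h he₂1
    · rw [if_neg hc1] at h
      exact absurd (Nat.dvd_one.mp (h ▸ Nat.dvd_lcm_left _ _)) he₁1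
  by_cases hee : e₁ = e₂
  · -- no secondary cycles
    have hkk : k = e₁ := by rw [hkl, hee, Nat.lcm_self]
    have hk1 : k ≠ 1 := by rw [hkk]; exact he₁1
    have hall : ∀ x : ZMod p × ZMod p,
        Function.minimalPeriod f x = 1 ∨ Function.minimalPeriod f x = k := by
      intro x
      rw [hmp x, hkk]
      by_cases h1 : (φ x).1 = 0 <;> by_cases h2 : (φ x).2 = 0
      · rw [if_pos h1, if_pos h2, Nat.lcm_self]
        exact Or.inl rfl
      · rw [if_pos h1, if_neg h2, Nat.lcm_one_left]
        exact Or.inr hee.symm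
      · rw [if_neg h1, if_pos h2, Nat.lcm_one_right]
        exact Or.inr rfl
      · rw [if_neg h1, if_neg h2, hee, Nat.lcm_self]
        exact Or.inr rfl
    constructor
    · intro _
      refine ⟨?_, ?_⟩
      · rw [hkk]
        exact dvd_trans he₁dvd (sub_dvd1 hp.out.one_lt.le)
      · have hset : {x : ZMod p × ZMod p | Function.minimalPeriod f x = k}
            = {y : ZMod p × ZMod p | y ≠ 0} := by
          ext x
          simp only [Set.mem_setOf_eq]
          constructor
          · intro h hx0
            rw [hx0, hmp0] at h
            exact hk1 h.symm
          · intro hx0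
            rcases hall x with h | h
            · exact absurd (hzero x h) hx0
            · exact h
        rw [hset, ncard_prod_ne_zero]
    · rintro ⟨x, hx1, hxk⟩
      rcases hall x with h | h
      · exact absurd h hx1
      · exact absurd h hxk
  · -- secondary cycles exist
    obtain ⟨ht1, ht1'⟩ := htdvd u₁ hu₁4
    obtain ⟨ht2, ht2'⟩ := htdvd u₂ hu₂4
    rw [← he₁def] at ht1 ht1'
    rw [← he₂def] at ht2 ht2'
    have hA := natDiv4 tpos ht1 ht1'
    have hB := natDiv4 tpos ht2 ht2'
    set E := Equiv.ofBijective φ hφbij with hE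
    rcases Ne.lt_or_gt hee with hlt | hlt
    · -- e₁ < e₂, s = e₁, k = e₂
      have hst : e₁ = t ∨ e₁ = 2 * t := by
        rcases hA with h | h | h
        · exact Or.inl h
        · exact Or.inr h
        · exfalso
          have := Nat.le_of_dvd (by omega) ht2'
          omega
      have hdvd12 : e₁ ∣ e₂ := by
        have hda : t ∣ 2 * t := ⟨2, by ring⟩
        have hdb : t ∣ 4 * t := ⟨4, by ring⟩
        have hdc : 2 * t ∣ 4 * t := ⟨2, by ring⟩
        rcases hA with h | h | h <;> rcases hB with h' | h' | h' <;> rw [h, h'] <;>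
          first
            | exact dvd_refl _
            | exact hda
            | exact hdb
            | exact hdc
            | (exfalso; omega)
      have hlcm : Nat.lcm e₁ e₂ = e₂ :=
        Nat.dvd_antisymm (Nat.lcm_dvd hdvd12 dvd_rfl) (Nat.dvd_lcm_right _ _)
      have hke2 : k = e₂ := by rw [hkl, hlcm]
      have hsnek : e₁ ≠ k := by omega
      have hx₁ : φ (E.symm (1, 0)) = (1, 0) := E.apply_symm_apply (1, 0)
      have hmpx₁ : Function.minimalPeriod f (E.symm (1, 0)) = e₁ := by
        rw [hmp, hx₁]
        rw [if_neg (show ((1 : ZMod p), (0 : ZMod p)).1 ≠ 0 from one_ne_zero),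
          if_pos (show ((1 : ZMod p), (0 : ZMod p)).2 = 0 from rfl), Nat.lcm_one_right]
      constructor
      · intro h
        exact absurd ⟨E.symm (1, 0), by rw [hmpx₁]; exact he₁1, by rw [hmpx₁]; exact hsnek⟩ h
      · intro _
        refine ⟨e₁, hst, ?_, he₁dvd, ?_, ?_, ?_⟩
        · intro x hx1 hxk
          rw [hmp x] at hx1 hxk ⊢
          by_cases h1 : (φ x).1 = 0 <;> by_cases h2 : (φ x).2 = 0
          · rw [if_pos h1, if_pos h2, Nat.lcm_self] at hx1
            exact absurd rfl hx1
          · rw [if_pos h1, if_neg h2, Nat.lcm_one_left] at hxk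
            exact absurd hke2.symm hxk
          · rw [if_neg h1, if_pos h2, Nat.lcm_one_right]
          · rw [if_neg h1, if_neg h2, hlcm] at hxk
            exact absurd hke2.symm hxk
        · rw [hke2]
          exact dvd_trans he₂dvd (sub_dvd2 hp.out.one_lt.le)
        · have hset : {x : ZMod p × ZMod p | Function.minimalPeriod f x = e₁}
              = φ ⁻¹' {y : ZMod p × ZMod p | y.1 ≠ 0 ∧ y.2 = 0} := by
            ext x
            simp only [Set.mem_setOf_eq, Set.mem_preimage]
            rw [hmp x]
            by_cases h1 : (φ x).1 = 0 <;> by_cases h2 : (φ x).2 = 0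
            · rw [if_pos h1, if_pos h2, Nat.lcm_self]
              exact iff_of_false (fun h => he₁1 h.symm) (fun h => h.1 h1)
            · rw [if_pos h1, if_neg h2, Nat.lcm_one_left]
              exact iff_of_false (fun h => by omega) (fun h => h.1 h1)
            · rw [if_neg h1, if_pos h2, Nat.lcm_one_right]
              exact iff_of_true rfl ⟨h1, h2⟩
            · rw [if_neg h1, if_neg h2, hlcm]
              exact iff_of_false (fun h => by omega) (fun h => h2 h.2)
          rw [hset, ncard_preimage_bij hφbij, ncard_fst_ne_snd_eq]
        · have hset : {x : ZMod p × ZMod p | Function.minimalPeriod f x = k}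
              = φ ⁻¹' {y : ZMod p × ZMod p | y.2 ≠ 0} := by
            ext x
            simp only [Set.mem_setOf_eq, Set.mem_preimage]
            rw [hmp x, hke2]
            by_cases h1 : (φ x).1 = 0 <;> by_cases h2 : (φ x).2 = 0
            · rw [if_pos h1, if_pos h2, Nat.lcm_self]
              exact iff_of_false (fun h => he₂1 h.symm) (fun h => h h2)
            · rw [if_pos h1, if_neg h2, Nat.lcm_one_left]
              exact iff_of_true rfl h2
            · rw [if_neg h1, if_pos h2, Nat.lcm_one_right]
              exact iff_of_false (fun h => by omega) (fun h => h h2)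
            · rw [if_neg h1, if_neg h2, hlcm]
              exact iff_of_true rfl h2
          rw [hset, ncard_preimage_bij hφbij, ncard_snd_ne]
    · -- e₂ < e₁, s = e₂, k = e₁
      have hst : e₂ = t ∨ e₂ = 2 * t := by
        rcases hB with h | h | h
        · exact Or.inl h
        · exact Or.inr h
        · exfalso
          have := Nat.le_of_dvd (by omega) ht1'
          omega
      have hdvd21 : e₂ ∣ e₁ := by
        have hda : t ∣ 2 * t := ⟨2, by ring⟩
        have hdb : t ∣ 4 * t := ⟨4, by ring⟩
        have hdc : 2 * t ∣ 4 * t := ⟨2, by ring⟩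
        rcases hB with h | h | h <;> rcases hA with h' | h' | h' <;> rw [h, h'] <;>
          first
            | exact dvd_refl _
            | exact hda
            | exact hdb
            | exact hdc
            | (exfalso; omega)
      have hlcm : Nat.lcm e₁ e₂ = e₁ :=
        Nat.dvd_antisymm (Nat.lcm_dvd dvd_rfl hdvd21) (Nat.dvd_lcm_left _ _)
      have hke1 : k = e₁ := by rw [hkl, hlcm]
      have hsnek : e₂ ≠ k := by omega
      have hx₁ : φ (E.symm (0, 1)) = ((0 : ZMod p), (1 : ZMod p)) := E.apply_symm_apply (0, 1)
      have hmpx₁ : Function.minimalPeriod f (E.symm (0, 1)) = e₂ := by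
        rw [hmp, hx₁]
        rw [if_pos (show ((0 : ZMod p), (1 : ZMod p)).1 = 0 from rfl),
          if_neg (show ((0 : ZMod p), (1 : ZMod p)).2 ≠ 0 from one_ne_zero), Nat.lcm_one_left]
      constructor
      · intro h
        exact absurd ⟨E.symm (0, 1), by rw [hmpx₁]; exact he₂1, by rw [hmpx₁]; exact hsnek⟩ h
      · intro _
        refine ⟨e₂, hst, ?_, he₂dvd, ?_, ?_, ?_⟩
        · intro x hx1 hxk
          rw [hmp x] at hx1 hxk ⊢
          by_cases h1 : (φ x).1 = 0 <;> by_cases h2 : (φ x).2 = 0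
          · rw [if_pos h1, if_pos h2, Nat.lcm_self] at hx1
            exact absurd rfl hx1
          · rw [if_pos h1, if_neg h2, Nat.lcm_one_left]
          · rw [if_neg h1, if_pos h2, Nat.lcm_one_right] at hxk
            exact absurd hke1.symm hxk
          · rw [if_neg h1, if_neg h2, hlcm] at hxk
            exact absurd hke1.symm hxk
        · rw [hke1]
          exact dvd_trans he₁dvd (sub_dvd2 hp.out.one_lt.le)
        · have hset : {x : ZMod p × ZMod p | Function.minimalPeriod f x = e₂}
              = φ ⁻¹' {y : ZMod p × ZMod p | y.2 ≠ 0 ∧ y.1 = 0} := by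
            ext x
            simp only [Set.mem_setOf_eq, Set.mem_preimage]
            rw [hmp x]
            by_cases h1 : (φ x).1 = 0 <;> by_cases h2 : (φ x).2 = 0
            · rw [if_pos h1, if_pos h2, Nat.lcm_self]
              exact iff_of_false (fun h => he₂1 h.symm) (fun h => h.1 h2)
            · rw [if_pos h1, if_neg h2, Nat.lcm_one_left]
              exact iff_of_true rfl ⟨h2, h1⟩
            · rw [if_neg h1, if_pos h2, Nat.lcm_one_right]
              exact iff_of_false (fun h => by omega) (fun h => h.1 h2)
            · rw [if_neg h1, if_neg h2, hlcm]
              exact iff_of_false (fun h => by omega) (fun h => h1 h.2)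
          rw [hset, ncard_preimage_bij hφbij, ncard_snd_ne_fst_eq]
        · have hset : {x : ZMod p × ZMod p | Function.minimalPeriod f x = k}
              = φ ⁻¹' {y : ZMod p × ZMod p | y.1 ≠ 0} := by
            ext x
            simp only [Set.mem_setOf_eq, Set.mem_preimage]
            rw [hmp x, hke1]
            by_cases h1 : (φ x).1 = 0 <;> by_cases h2 : (φ x).2 = 0
            · rw [if_pos h1, if_pos h2, Nat.lcm_self]
              exact iff_of_false (fun h => he₁1 h.symm) (fun h => h h1)
            · rw [if_pos h1, if_neg h2, Nat.lcm_one_left]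
              exact iff_of_false (fun h => by omega) (fun h => h h1)
            · rw [if_neg h1, if_pos h2, Nat.lcm_one_right]
              exact iff_of_true rfl h1
            · rw [if_neg h1, if_neg h2, hlcm]
              exact iff_of_true rfl h1
          rw [hset, ncard_preimage_bij hφbij, ncard_fst_ne]

private lemma nonsplit_main (p k t : ℕ) [hp : Fact p.Prime] (hpodd : p ≠ 2)
    (hk : 0 < k)
    (hfix : ∀ x : ZMod p × ZMod p, (subAddStep p)^[k] x = x)
    (hmin : ∀ j, 0 < j → (∀ x : ZMod p × ZMod p, (subAddStep p)^[j] x = x) → k ≤ j)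
    (hns : ¬ ∃ i : ZMod p, i ^ 2 = -1) : SAGoal p k t := by
  have : Fintype (GaloisField p 2) := Fintype.ofFinite _
  set f := subAddStep p with hf
  have hcard : Fintype.card (GaloisField p 2) = p ^ 2 := by
    rw [← Nat.card_eq_fintype_card]
    exact GaloisField.card p 2 (by norm_num)
  have hchar2 : ringChar (GaloisField p 2) ≠ 2 := by
    rw [ringChar.eq (GaloisField p 2) p]
    exact hpodd
  obtain ⟨m, hm⟩ : ∃ m, p = 2 * m + 1 := by
    obtain ⟨m, hm⟩ := (hp.out.odd_of_ne_two hpodd)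
    exact ⟨m, hm⟩
  have hsq : IsSquare (-1 : GaloisField p 2) := by
    rw [FiniteField.isSquare_iff hchar2 (neg_ne_zero.mpr one_ne_zero)]
    have hhalf : Fintype.card (GaloisField p 2) / 2 = 2 * (m * m + m) := by
      rw [hcard, hm]
      have h2 : (2 * m + 1) ^ 2 = 4 * (m * m) + 4 * m + 1 := by ring
      omega
    rw [hhalf, pow_mul]
    norm_num
  obtain ⟨r, hr⟩ := hsq
  have hI : r ^ 2 = -1 := by rw [sq]; exact hr.symm
  set c : ZMod p →+* (GaloisField p 2) := ZMod.castHom dvd_rfl (GaloisField p 2) with hc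
  have hcinj : Function.Injective c := c.injective
  have hrnot : ∀ w : ZMod p, c w ≠ r := by
    intro w hw
    exact hns ⟨w, hcinj (by rw [map_pow, hw, hI, map_neg, map_one])⟩
  have hr0 : r ≠ 0 := by
    intro h
    exact hrnot 0 (by rw [map_zero, h])
  have hrm1 : r ≠ -1 := by
    intro h
    exact hrnot (-1) (by rw [map_neg, map_one, h])
  set θ : ZMod p × ZMod p → (GaloisField p 2) := fun x => c x.1 + c x.2 * r with hθdef
  have hθinj : Function.Injective θ := by
    intro a b h
    have h' : c a.1 + c a.2 * r = c b.1 + c b.2 * r := h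
    by_cases h2 : a.2 = b.2
    · have h1 : c a.1 = c b.1 := by
        rw [h2] at h'
        exact add_right_cancel h'
      exact Prod.ext (hcinj h1) h2
    · exfalso
      have hd : (b.2 - a.2 : ZMod p) ≠ 0 := sub_ne_zero.mpr (Ne.symm h2)
      have hdF : c (b.2 - a.2) ≠ 0 := fun hh => hd (hcinj (hh.trans (map_zero c).symm))
      apply hrnot ((a.1 - b.1) / (b.2 - a.2))
      have hdF' : c b.2 - c a.2 ≠ 0 := by rwa [map_sub] at hdF
      rw [map_div₀, map_sub, map_sub, div_eq_iff hdF']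
      linear_combination h'
  have hθ0 : θ 0 = 0 := by simp [hθdef]
  set u : (GaloisField p 2) := 1 + r with hudef
  have hu0 : u ≠ 0 := by
    intro h
    rw [hudef] at h
    exact hrm1 (by linear_combination h)
  have hu1 : u ≠ 1 := by
    intro h
    rw [hudef] at h
    exact hr0 (by linear_combination h)
  have hstep : ∀ x, θ (f x) = u * θ x := by
    intro x
    show c (x.1 - x.2) + c (x.1 + x.2) * r = (1 + r) * (c x.1 + c x.2 * r)
    rw [map_sub, map_add]
    linear_combination (-(c x.2)) * hI
  have hiter : ∀ (j : ℕ) (x), θ (f^[j] x) = u ^ j * θ x := by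
    intro j
    induction j with
    | zero => intro x; simp
    | succ n ih =>
      intro x
      rw [Function.iterate_succ_apply', hstep, ih, pow_succ]
      ring
  have hper : ∀ (j : ℕ) (x), Function.IsPeriodicPt f j x ↔ u ^ j * θ x = θ x := by
    intro j x
    constructor
    · intro h
      have h' : f^[j] x = x := h
      have h2 := congrArg θ h'
      rwa [hiter] at h2
    · intro h
      show f^[j] x = x
      apply hθinj
      rw [hiter]
      exact h
  set e := orderOf u with hedef
  have hupow : u ^ (p ^ 2 - 1) = 1 := by
    have h := FiniteField.pow_card_sub_one_eq_one u hu0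
    rwa [hcard] at h
  have hppos : 0 < p ^ 2 - 1 := by
    have h2 := hp.out.two_le
    have h3 : 2 * 2 ≤ p ^ 2 := by
      rw [pow_two]
      exact Nat.mul_le_mul h2 h2
    omega
  have hepos : 0 < e :=
    orderOf_pos_iff.mpr (isOfFinOrder_iff_pow_eq_one.mpr ⟨p ^ 2 - 1, hppos, hupow⟩)
  have hedvd : e ∣ p ^ 2 - 1 := orderOf_dvd_of_pow_eq_one hupow
  have he1 : e ≠ 1 := fun h => hu1 (orderOf_eq_one_iff.mp h)
  have hθne : ∀ x : ZMod p × ZMod p, x ≠ 0 → θ x ≠ 0 := by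
    intro x hx h
    exact hx (hθinj (h.trans hθ0.symm))
  have hmpx : ∀ x : ZMod p × ZMod p, x ≠ 0 → Function.minimalPeriod f x = e := by
    intro x hx
    apply minPeriod_eq_of_iff
    intro j
    rw [hper, hedef, orderOf_dvd_iff_pow_eq_one]
    constructor
    · intro h
      exact mul_right_cancel₀ (hθne x hx) (h.trans (one_mul (θ x)).symm)
    · intro h
      rw [h, one_mul]
  have hmp0 : Function.minimalPeriod f 0 = 1 := by
    apply minPeriod_eq_of_iff
    intro j
    simp only [Nat.one_dvd, iff_true]
    have hf0 : f 0 = 0 := by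
      show ((0 : ZMod p) - 0, (0 : ZMod p) + 0) = (0, 0)
      simp
    show f^[j] 0 = 0
    exact Function.iterate_fixed hf0 j
  have hx₀ : ((1 : ZMod p), (0 : ZMod p)) ≠ 0 := by
    intro h
    exact one_ne_zero (congrArg Prod.fst h)
  have hke : k = e := by
    have hL : e ∣ k := by
      have h := (hper k (1, 0)).mp (hfix (1, 0))
      rw [hedef, orderOf_dvd_iff_pow_eq_one]
      exact mul_right_cancel₀ (hθne _ hx₀) (h.trans (one_mul _).symm)
    have hU : k ≤ e := by
      apply hmin _ hepos
      intro x
      have h : u ^ e * θ x = θ x := by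
        rw [hedef, pow_orderOf_eq_one, one_mul]
      exact (hper e x).mpr h
    have := Nat.le_of_dvd hk hL
    omega
  have hk1 : k ≠ 1 := by rw [hke]; exact he1
  constructor
  · intro _
    refine ⟨by rw [hke]; exact hedvd, ?_⟩
    have hset : {x : ZMod p × ZMod p | Function.minimalPeriod f x = k}
        = {y : ZMod p × ZMod p | y ≠ 0} := by
      ext x
      simp only [Set.mem_setOf_eq]
      constructor
      · intro h hx0
        rw [hx0, hmp0] at h
        exact hk1 h.symm
      · intro hx0
        rw [hmpx x hx0, hke]
    rw [hset, ncard_prod_ne_zero]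
  · rintro ⟨x, hx1, hxk⟩
    by_cases hx0 : x = 0
    · rw [hx0, hmp0] at hx1
      exact (hx1 rfl).elim
    · rw [hmpx x hx0, ← hke] at hxk
      exact (hxk rfl).elim

/-- let `p` be an odd prime, `t = ord(-4)` in `(ℤ/pℤ)ˣ`, and `k` the
`ℤ_p`-order of the sub-add matrix.  A secondary cycle is a directed cycle whose length
(= common minimal period of its vertices) is neither `1` nor `k`; the number of directed
cycles of length `ℓ` is (number of vertices of minimal period `ℓ`)/`ℓ`.
(a) If `Γ_{M,p}` has no secondary cycles, then exactly `p² - 1` vertices have minimal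
period `k` and `k ∣ p² - 1`, so there are `(p²-1)/k` primary (length-`k`) cycles.
(b) If `Γ_{M,p}` has secondary cycles, they all have a common length `s ∈ {t, 2t}`;
exactly `p - 1` vertices have minimal period `s` and exactly `p² - p` have minimal
period `k`, with `s ∣ p - 1` and `k ∣ p² - p`, giving `(p-1)/s` secondary and
`(p²-p)/k` primary cycles. -/
theorem stmt19 (p k t : ℕ) (hp : p.Prime) (hpodd : p ≠ 2)
    (ht : t = orderOf (-4 : ZMod p))
    (hk : 0 < k) (hfix : ∀ x : ZMod p × ZMod p, (subAddStep p)^[k] x = x)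
    (hmin : ∀ j, 0 < j → (∀ x : ZMod p × ZMod p, (subAddStep p)^[j] x = x) → k ≤ j) :
    ((¬ ∃ x : ZMod p × ZMod p,
        Function.minimalPeriod (subAddStep p) x ≠ 1 ∧
        Function.minimalPeriod (subAddStep p) x ≠ k) →
      k ∣ p ^ 2 - 1 ∧
      {x : ZMod p × ZMod p |
        Function.minimalPeriod (subAddStep p) x = k}.ncard = p ^ 2 - 1) ∧
    ((∃ x : ZMod p × ZMod p,
        Function.minimalPeriod (subAddStep p) x ≠ 1 ∧
        Function.minimalPeriod (subAddStep p) x ≠ k) →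
      ∃ s : ℕ, (s = t ∨ s = 2 * t) ∧
        (∀ x : ZMod p × ZMod p,
          Function.minimalPeriod (subAddStep p) x ≠ 1 →
          Function.minimalPeriod (subAddStep p) x ≠ k →
          Function.minimalPeriod (subAddStep p) x = s) ∧
        s ∣ p - 1 ∧ k ∣ p ^ 2 - p ∧
        {x : ZMod p × ZMod p |
          Function.minimalPeriod (subAddStep p) x = s}.ncard = p - 1 ∧
        {x : ZMod p × ZMod p |
          Function.minimalPeriod (subAddStep p) x = k}.ncard = p ^ 2 - p) := by
  haveI : Fact p.Prime := ⟨hp⟩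
  by_cases hsq : ∃ i : ZMod p, i ^ 2 = -1
  · obtain ⟨i, hi⟩ := hsq
    exact split_main p k t hpodd ht hk hfix hmin i hi
  · exact nonsplit_main p k t hpodd hk hfix hmin hsq
end
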